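/- arXiv:2102.05284 — 9 statements merged into one kernel-verified Lean document; each statement's English description precedes it below -/
import Mathlib

section
/- Anytime Bernstein inequality, first form (Lemma B.3 of the paper): Let (X_i)_{i≥1} be a sequence of i.i.d. real random variables with X_i ∈ [0, B] almost surely, for a fixed constant B > 0, and let μ = E[X_1]. Then for every δ ∈ (0,1), with probability at least 1 − δ, simultaneously for all n ≥ 1: |Σ_{i=1}^n (X_i − μ)| ≤ 2·√(B·μ·n·ln(2n/δ)) + B·ln(2n/δ). -/
/-!
Since `X / B ∈ [0, 1]`, convexity of `exp` gives the Poisson-type bound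
`𝔼 exp (t X) ≤ exp (m / B * (exp (t B) - 1))` for every real `t`, and independence turns it into
the same bound for `S n = ∑_{i ≤ n} X i` with `m` replaced by `a = n m`. With `L = log (2n/δ)` and
`s = √(B L / a)` the deviation `r = 2 √(B a L) + B L` equals `a ((1 + s)² - 1)`, so the Chernoff
bound at `exp (t B) = (1 + s)²`, together with `2 (1 + s)² log (1 + s) ≥ 3 s² + 2 s`, bounds the
upper tail by `exp (-2L)`; on the lower side `exp u ≤ 1 + u + u² / 2` for `u ≤ 0` gives the bound
`exp (-r² / (2 a B)) ≤ exp (-2L)`. Hence the `n`-th deviation has probability at most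
`2 exp (-2L) = δ² / (2 n²)`, and a union bound over `n` costs `δ² π² / 12 ≤ δ`.
-/

open MeasureTheory ProbabilityTheory Finset Real

lemma exp_le_quadratic_of_nonpos {x : ℝ} (hx : x ≤ 0) : exp x ≤ 1 + x + x ^ 2 / 2 := by
  have hcubic : 1 + -x + (-x) ^ 2 / 2 + (-x) ^ 3 / 6 ≤ exp (-x) := by
    simpa [Finset.sum_range_succ, Nat.factorial] using sum_le_exp_of_nonneg (neg_nonneg.2 hx) 4
  have hp : 0 ≤ 1 + x + x ^ 2 / 2 := by nlinarith [sq_nonneg (x + 1)]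
  -- `(1 + x + x²/2) (1 - x + x²/2 - x³/6) = 1 - x³/6 + x⁴/12 - x⁵/12 ≥ 1`
  have hone : 1 ≤ (1 + x + x ^ 2 / 2) * exp (-x) := by
    nlinarith [mul_le_mul_of_nonneg_left hcubic hp, pow_two_nonneg x,
      pow_nonneg (neg_nonneg.2 hx) 3, mul_nonneg (pow_nonneg (neg_nonneg.2 hx) 3) (sq_nonneg x)]
  calc exp x ≤ exp x * ((1 + x + x ^ 2 / 2) * exp (-x)) :=
        le_mul_of_one_le_right (exp_pos x).le hone
    _ = 1 + x + x ^ 2 / 2 := by rw [mul_left_comm, ← exp_add, add_neg_cancel, exp_zero, mul_one]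

lemma three_mul_sq_add_two_mul_le_mul_log_one_add {s : ℝ} (hs : 0 ≤ s) :
    3 * s ^ 2 + 2 * s ≤ 2 * (1 + s) ^ 2 * log (1 + s) := by
  have hlog := le_log_one_add_of_nonneg hs
  rw [div_le_iff₀ (by positivity)] at hlog
  nlinarith [mul_le_mul_of_nonneg_left hlog (sq_nonneg (1 + s)), pow_nonneg hs 3]

lemma exp_mul_le_one_add_mul_exp_sub_one {y B : ℝ} (hB : 0 < B) (hy : y ∈ Set.Icc 0 B) (t : ℝ) :
    exp (t * y) ≤ 1 + y / B * (exp (t * B) - 1) := by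
  have hθ : y / B ≤ 1 := (div_le_one hB).2 hy.2
  have hconv := convexOn_exp.2 (Set.mem_univ 0) (Set.mem_univ (t * B)) (sub_nonneg.2 hθ)
    (div_nonneg hy.1 hB.le) (sub_add_cancel 1 (y / B))
  calc exp (t * y) = exp ((1 - y / B) • 0 + (y / B) • (t * B)) := by
        congr 1; simp only [smul_eq_mul, mul_zero, zero_add]; field_simp
    _ ≤ (1 - y / B) • exp 0 + (y / B) • exp (t * B) := hconv
    _ = 1 + y / B * (exp (t * B) - 1) := by simp only [smul_eq_mul, exp_zero]; ring

section PoissonTail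

variable {Ω : Type*} {m0 : MeasurableSpace Ω} {μ : Measure Ω} [IsProbabilityMeasure μ] {B : ℝ}

lemma mgf_le_exp_of_mem_Icc {Y : Ω → ℝ} (hB : 0 < B) (hY : AEMeasurable Y μ)
    (hbound : ∀ᵐ ω ∂μ, Y ω ∈ Set.Icc 0 B) (t : ℝ) :
    mgf Y μ t ≤ exp ((∫ ω, Y ω ∂μ) / B * (exp (t * B) - 1)) := by
  have hY_int : Integrable Y μ := .of_mem_Icc 0 B hY hbound
  calc mgf Y μ t ≤ ∫ ω, (1 + (exp (t * B) - 1) / B * Y ω) ∂μ := by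
        refine integral_mono_ae (integrable_exp_mul_of_mem_Icc hY hbound)
          ((integrable_const 1).add (hY_int.const_mul _)) ?_
        filter_upwards [hbound] with ω hω
        simpa [div_mul_comm] using exp_mul_le_one_add_mul_exp_sub_one hB hω t
    _ = (∫ ω, Y ω ∂μ) / B * (exp (t * B) - 1) + 1 := by
        rw [integral_add (integrable_const 1) (hY_int.const_mul _), integral_const_mul]
        simp only [integral_const, probReal_univ, smul_eq_mul, mul_one]
        ring
    _ ≤ _ := add_one_le_exp _

variable {S : Ω → ℝ} {a : ℝ}

lemma measureReal_ge_le_of_mgf_le (hB : 0 < B) (ha : 0 ≤ a)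
    (hint : ∀ t, Integrable (fun ω => exp (t * S ω)) μ)
    (hmgf : ∀ t, mgf S μ t ≤ exp (a / B * (exp (t * B) - 1))) {s : ℝ} (hs : 0 ≤ s) :
    μ.real {ω | a * (1 + s) ^ 2 ≤ S ω} ≤ exp (-(2 * a * s ^ 2 / B)) := by
  set t := 2 * log (1 + s) / B
  have hexp : exp (t * B) = (1 + s) ^ 2 := by
    rw [div_mul_cancel₀ _ hB.ne', two_mul, exp_add, exp_log (by positivity)]; ring
  calc μ.real {ω | a * (1 + s) ^ 2 ≤ S ω}
      ≤ exp (-t * (a * (1 + s) ^ 2)) * mgf S μ t :=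
        measure_ge_le_exp_mul_mgf _
          (by have := log_nonneg (le_add_of_nonneg_right hs); positivity) (hint t)
    _ ≤ exp (-t * (a * (1 + s) ^ 2)) * exp (a / B * (exp (t * B) - 1)) := by gcongr; exact hmgf t
    _ = exp (a / B * ((2 * s + s ^ 2) - 2 * (1 + s) ^ 2 * log (1 + s))) := by
        rw [← exp_add, hexp]; congr 1; ring
    _ ≤ exp (-(2 * a * s ^ 2 / B)) := by
        refine exp_le_exp.2 ?_
        have := three_mul_sq_add_two_mul_le_mul_log_one_add hs
        rw [← sub_nonneg] at this ⊢
        have hfac : -(2 * a * s ^ 2 / B)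
              - a / B * ((2 * s + s ^ 2) - 2 * (1 + s) ^ 2 * log (1 + s))
            = a / B * (2 * (1 + s) ^ 2 * log (1 + s) - (3 * s ^ 2 + 2 * s)) := by ring
        rw [hfac]; positivity

lemma measureReal_le_le_of_mgf_le (hB : 0 < B) (ha : 0 < a)
    (hint : ∀ t, Integrable (fun ω => exp (t * S ω)) μ)
    (hmgf : ∀ t, mgf S μ t ≤ exp (a / B * (exp (t * B) - 1))) {r : ℝ} (hr : 0 ≤ r) :
    μ.real {ω | S ω ≤ a - r} ≤ exp (-(r ^ 2 / (2 * a * B))) := by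
  set t := -(r / (a * B))
  have ht : t ≤ 0 := neg_nonpos.2 (by positivity)
  have hquad := exp_le_quadratic_of_nonpos (mul_nonpos_of_nonpos_of_nonneg ht hB.le)
  calc μ.real {ω | S ω ≤ a - r}
      ≤ exp (-t * (a - r)) * mgf S μ t := measure_le_le_exp_mul_mgf _ ht (hint t)
    _ ≤ exp (-t * (a - r)) * exp (a / B * (exp (t * B) - 1)) := by gcongr; exact hmgf t
    _ ≤ exp (-t * (a - r)) * exp (a / B * (t * B + (t * B) ^ 2 / 2)) := by
        gcongr; linarith
    _ = exp (-(r ^ 2 / (2 * a * B))) := by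
        rw [← exp_add]; congr 1; simp only [t]; field_simp; ring

lemma measureReal_abs_sub_gt_le_of_mgf_le (hB : 0 < B) (ha : 0 < a)
    (hint : ∀ t, Integrable (fun ω => exp (t * S ω)) μ)
    (hmgf : ∀ t, mgf S μ t ≤ exp (a / B * (exp (t * B) - 1))) {L : ℝ} (hL : 0 ≤ L) :
    μ.real {ω | 2 * √(B * a * L) + B * L < |S ω - a|} ≤ 2 * exp (-(2 * L)) := by
  set s := √(B * L / a)
  have has : a * s = √(B * a * L) := by
    have : B * a * L = a ^ 2 * (B * L / a) := by field_simp
    rw [this, sqrt_mul (sq_nonneg a), sqrt_sq ha.le]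
  have has2 : a * s ^ 2 = B * L := by
    rw [sq_sqrt (by positivity)]; field_simp
  have hsplit : {ω | 2 * √(B * a * L) + B * L < |S ω - a|} ⊆
      {ω | a * (1 + s) ^ 2 ≤ S ω} ∪ {ω | S ω ≤ a - (2 * √(B * a * L) + B * L)} := by
    intro ω (hω : 2 * √(B * a * L) + B * L < |S ω - a|)
    rcases lt_abs.1 hω with h | h
    · exact Or.inl (show a * (1 + s) ^ 2 ≤ S ω by linear_combination h + 2 * has + has2)
    · exact Or.inr (show S ω ≤ a - (2 * √(B * a * L) + B * L) by linarith)
  have hupper := measureReal_ge_le_of_mgf_le hB ha.le hint hmgf (sqrt_nonneg (B * L / a))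
  have hlower := measureReal_le_le_of_mgf_le hB ha hint hmgf
    (r := 2 * √(B * a * L) + B * L) (by positivity)
  calc _ ≤ _ := measureReal_mono hsplit
    _ ≤ _ := measureReal_union_le _ _
    _ ≤ exp (-(2 * L)) + exp (-(2 * L)) := by
        gcongr
        · refine hupper.trans_eq ?_
          congr 1; rw [mul_assoc, has2]; field_simp
        · refine hlower.trans (exp_le_exp.2 (neg_le_neg ?_))
          rw [le_div_iff₀ (by positivity)]
          nlinarith [sq_sqrt (show 0 ≤ B * a * L by positivity),
            mul_nonneg (sqrt_nonneg (B * a * L)) (mul_nonneg hB.le hL), sq_nonneg (B * L)]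
    _ = 2 * exp (-(2 * L)) := by ring

end PoissonTail

section IID

variable {Ω : Type*} {m0 : MeasurableSpace Ω} {μ : Measure Ω} {X : ℕ → Ω → ℝ} {B : ℝ}

lemma ae_sum_Icc_mem_Icc (hbound : ∀ i, ∀ᵐ ω ∂μ, X i ω ∈ Set.Icc 0 B) (n : ℕ) :
    ∀ᵐ ω ∂μ, (∑ i ∈ Icc 1 n, X i) ω ∈ Set.Icc 0 (n * B) := by
  filter_upwards [ae_all_iff.2 hbound] with ω hω
  rw [Finset.sum_apply]
  refine ⟨sum_nonneg fun i _ => (hω i).1, ?_⟩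
  simpa using sum_le_card_nsmul (Icc 1 n) (X · ω) B fun i _ => (hω i).2

lemma mgf_sum_Icc_le [IsProbabilityMeasure μ] (hB : 0 < B) (hmeas : ∀ i, Measurable (X i))
    (hindep : iIndepFun X μ) (hident : ∀ i, IdentDistrib (X i) (X 1) μ μ)
    (hbound : ∀ i, ∀ᵐ ω ∂μ, X i ω ∈ Set.Icc 0 B) (n : ℕ) (t : ℝ) :
    mgf (∑ i ∈ Icc 1 n, X i) μ t ≤ exp ((n * ∫ ω, X 1 ω ∂μ) / B * (exp (t * B) - 1)) := by
  rw [hindep.mgf_sum hmeas,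
    prod_congr rfl fun i _ => congrFun (mgf_congr_identDistrib (hident i)) t, prod_const,
    Nat.card_Icc, Nat.add_sub_cancel, mul_div_assoc, mul_assoc, exp_nat_mul]
  exact pow_le_pow_left₀ mgf_nonneg
    (mgf_le_exp_of_mem_Icc hB (hmeas 1).aemeasurable (hbound 1) t) n

lemma measureReal_abs_sum_Icc_sub_gt_le [IsProbabilityMeasure μ] (hB : 0 < B)
    (hmeas : ∀ i, Measurable (X i)) (hindep : iIndepFun X μ)
    (hident : ∀ i, IdentDistrib (X i) (X 1) μ μ)
    (hbound : ∀ i, ∀ᵐ ω ∂μ, X i ω ∈ Set.Icc 0 B) {m : ℝ} (hm : m = ∫ ω, X 1 ω ∂μ)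
    {n : ℕ} (hn : 1 ≤ n) {L : ℝ} (hL : 0 ≤ L) :
    μ.real {ω | 2 * √(B * m * n * L) + B * L < |∑ i ∈ Icc 1 n, (X i ω - m)|}
      ≤ 2 * exp (-(2 * L)) := by
  have hm0 : 0 ≤ m := hm ▸ integral_nonneg_of_ae ((hbound 1).mono fun ω h => h.1)
  rcases hm0.eq_or_lt with rfl | hm_pos
  · have hzero (i : ℕ) : X i =ᵐ[μ] 0 := by
      refine (integral_eq_zero_iff_of_nonneg_ae ((hbound i).mono fun ω h => h.1)
        (.of_mem_Icc 0 B (hmeas i).aemeasurable (hbound i))).1 ?_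
      rw [(hident i).integral_eq, ← hm]
    have hnull : μ {ω | 2 * √(B * 0 * n * L) + B * L < |∑ i ∈ Icc 1 n, (X i ω - 0)|} = 0 := by
      refine measure_eq_zero_iff_ae_notMem.2 ?_
      filter_upwards [ae_all_iff.2 hzero] with ω hω
      simp [hω, mul_nonneg hB.le hL]
    rw [measureReal_def, hnull, ENNReal.toReal_zero]
    positivity
  · have hsum (ω : Ω) : ∑ i ∈ Icc 1 n, (X i ω - m) = (∑ i ∈ Icc 1 n, X i) ω - n * m := by
      simp [sum_sub_distrib, Finset.sum_apply]
    have hint (t : ℝ) : Integrable (fun ω => exp (t * (∑ i ∈ Icc 1 n, X i) ω)) μ :=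
      integrable_exp_mul_of_mem_Icc (by fun_prop) (ae_sum_Icc_mem_Icc hbound n)
    have hmgf (t : ℝ) := mgf_sum_Icc_le hB hmeas hindep hident hbound n t
    rw [← hm] at hmgf
    have := measureReal_abs_sub_gt_le_of_mgf_le hB (by positivity) hint hmgf hL
    simpa only [hsum, mul_comm (n : ℝ) m, ← mul_assoc] using this

end IID

lemma tsum_ofReal_sq_div_le {δ : ℝ} (hδ0 : 0 ≤ δ) (hδ1 : δ ≤ 1) :
    ∑' n : ℕ, ENNReal.ofReal (δ ^ 2 / (2 * ((n : ℝ) + 1) ^ 2)) ≤ ENNReal.ofReal δ := by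
  have hzeta : HasSum (fun n : ℕ => 1 / ((n : ℝ) + 1) ^ 2) (π ^ 2 / 6) := by
    simpa using (hasSum_nat_add_iff' 1).2 hasSum_zeta_two
  have hsum :
      HasSum (fun n : ℕ => δ ^ 2 / (2 * ((n : ℝ) + 1) ^ 2)) (δ ^ 2 / 2 * (π ^ 2 / 6)) := by
    have hfun : (fun n : ℕ => δ ^ 2 / (2 * ((n : ℝ) + 1) ^ 2))
        = fun n : ℕ => δ ^ 2 / 2 * (1 / ((n : ℝ) + 1) ^ 2) := by
      ext n; rw [mul_one_div, div_div]
    rw [hfun]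
    exact hzeta.mul_left _
  rw [← ENNReal.ofReal_tsum_of_nonneg (fun n => by positivity) hsum.summable, hsum.tsum_eq]
  refine ENNReal.ofReal_le_ofReal ?_
  have hπ : π ^ 2 ≤ 12 := by nlinarith [pi_lt_d2, pi_pos]
  nlinarith [mul_le_mul_of_nonneg_left hπ (sq_nonneg δ), mul_le_mul_of_nonneg_left hδ1 hδ0]

/-- Anytime Bernstein inequality, first form (Lemma B.3): for i.i.d. `X_i ∈ [0,B]` with
mean `m`, with probability at least `1 - δ`, simultaneously for all `n ≥ 1`,
`|∑_{i=1}^n (X_i - m)| ≤ 2√(B m n ln(2n/δ)) + B ln(2n/δ)`. -/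
theorem anytime_bernstein_first
    {Ω : Type*} {m0 : MeasurableSpace Ω} {μ : Measure Ω} [IsProbabilityMeasure μ]
    (X : ℕ → Ω → ℝ) (B : ℝ) (hB : 0 < B)
    (hmeas : ∀ i, Measurable (X i))
    (hindep : iIndepFun X μ)
    (hident : ∀ i, IdentDistrib (X i) (X 1) μ μ)
    (hbound : ∀ i, ∀ᵐ ω ∂μ, X i ω ∈ Set.Icc (0 : ℝ) B)
    (m : ℝ) (hm : m = ∫ ω, X 1 ω ∂μ)
    (δ : ℝ) (hδ0 : 0 < δ) (hδ1 : δ < 1) :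
    ENNReal.ofReal (1 - δ) ≤
      μ {ω | ∀ n : ℕ, 1 ≤ n →
        |∑ i ∈ Finset.Icc 1 n, (X i ω - m)| ≤
          2 * Real.sqrt (B * m * n * Real.log (2 * n / δ)) +
            B * Real.log (2 * n / δ)} := by
  set G := {ω | ∀ n : ℕ, 1 ≤ n → |∑ i ∈ Finset.Icc 1 n, (X i ω - m)| ≤
    2 * Real.sqrt (B * m * n * Real.log (2 * n / δ)) + B * Real.log (2 * n / δ)}
  set bad : ℕ → Set Ω := fun n => {ω | 2 * √(B * m * n * log (2 * n / δ)) + B * log (2 * n / δ)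
    < |∑ i ∈ Icc 1 n, (X i ω - m)|}
  have hbad (k : ℕ) : μ (bad (k + 1)) ≤ ENNReal.ofReal (δ ^ 2 / (2 * ((k : ℝ) + 1) ^ 2)) := by
    have hy : 1 ≤ 2 * ((k + 1 : ℕ) : ℝ) / δ := by
      rw [le_div_iff₀ hδ0]; push_cast; linarith [(k.cast_nonneg : (0 : ℝ) ≤ k)]
    have htail := measureReal_abs_sum_Icc_sub_gt_le hB hmeas hindep hident hbound hm
      (Nat.le_add_left 1 k) (log_nonneg hy)
    rw [← ofReal_measureReal]
    refine ENNReal.ofReal_le_ofReal (htail.trans_eq ?_)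
    push_cast
    rw [exp_neg, mul_comm 2 (log _), exp_mul, exp_log (by positivity), rpow_two]
    field_simp
  have hcompl : μ Gᶜ ≤ ENNReal.ofReal δ := calc
    μ Gᶜ ≤ μ (⋃ k : ℕ, bad (k + 1)) := by
      refine measure_mono fun ω hω => ?_
      obtain ⟨n, hn, hviol⟩ : ∃ n, 1 ≤ n ∧ ω ∈ bad n := by simpa [G, bad] using hω
      exact Set.mem_iUnion.2 ⟨n - 1, by rwa [Nat.sub_add_cancel hn]⟩
    _ ≤ ∑' k : ℕ, μ (bad (k + 1)) := measure_iUnion_le _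
    _ ≤ ∑' k : ℕ, ENNReal.ofReal (δ ^ 2 / (2 * ((k : ℝ) + 1) ^ 2)) := ENNReal.tsum_le_tsum hbad
    _ ≤ ENNReal.ofReal δ := tsum_ofReal_sq_div_le hδ0.le hδ1.le
  rw [ENNReal.ofReal_sub _ hδ0.le, ENNReal.ofReal_one, tsub_le_iff_right]
  calc 1 = μ Set.univ := measure_univ.symm
    _ ≤ μ G + μ Gᶜ := measure_univ_le_add_compl G
    _ ≤ μ G + ENNReal.ofReal δ := by gcongr
end

section
/- Anytime Bernstein inequality, empirical form (Lemma B.3 of the paper): Let (X_i)_{i≥1} be a sequence of i.i.d. real random variables with X_i ∈ [0, B] almost surely, for a fixed constant B > 0, and let μ = E[X_1]. Then for every δ ∈ (0,1), with probability at least 1 − δ, simultaneously for all n ≥ 1: |Σ_{i=1}^n (X_i − μ)| ≤ 2·√(B·(Σ_{i=1}^n X_i)·ln(2n/δ)) + 7B·ln(2n/δ). -/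
/-!
At each time `n`, Bernstein's inequality for the centred variables `Xᵢ - m`, whose variances are at
most `B m` because `0 ≤ Xᵢ ≤ B`, is applied with confidence `δ / (n (n + 1))`. These confidences
sum to `δ`, so with probability at least `1 - δ`, for all `n` at once and with `S = ∑ᵢ Xᵢ`,
`|S - n m| ≤ √(2 n B m L) + 2 B L / 3`, where `L = log (2 n (n + 1) / δ) ≤ 2 log (2 n / δ)`.
Since `n m ≤ S + |S - n m|`, this bounds `D = |S - n m|` by `2 a √(S + D) + 4 a² / 3` with
`a² = B log (2 n / δ)`, and solving for `D` gives `D ≤ 2 a √S + 7 a²`.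
-/

open MeasureTheory ProbabilityTheory Finset Real

lemma one_sub_div_three_mul_exp_sub_le {x : ℝ} (hx : 0 ≤ x) :
    (1 - x / 3) * (exp x - 1 - x) ≤ x ^ 2 / 2 := by
  set g : ℝ → ℝ := fun y => y ^ 2 / 2 - (1 - y / 3) * (exp y - 1 - y)
  set g' : ℝ → ℝ := fun y => y + (exp y - 1 - y) / 3 - (1 - y / 3) * (exp y - 1)
  have hg : ∀ y, HasDerivAt g (g' y) y := by
    intro y
    refine (((hasDerivAt_pow 2 y).div_const 2).sub
      (((hasDerivAt_id y).div_const 3).const_sub 1 |>.mul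
        (((hasDerivAt_exp y).sub_const 1).sub (hasDerivAt_id y)))).congr_deriv ?_
    simp only [g', Pi.sub_apply, id_eq]
    ring
  have hg' : ∀ y, HasDerivAt g' ((1 - (1 - y) * exp y) / 3) y := by
    intro y
    refine (((hasDerivAt_id y).add ((((hasDerivAt_exp y).sub_const 1).sub
      (hasDerivAt_id y)).div_const 3)).sub
        (((hasDerivAt_id y).div_const 3).const_sub 1 |>.mul
          ((hasDerivAt_exp y).sub_const 1))).congr_deriv ?_
    simp only [id_eq]
    ring
  -- `(1 - y) eʸ ≤ 1` is `1 - y ≤ e⁻ʸ`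
  have hg'_mono : Monotone g' := monotone_of_hasDerivAt_nonneg hg' fun y => by
    have h := mul_le_mul_of_nonneg_right (add_one_le_exp (-y)) (exp_pos y).le
    rw [← exp_add, neg_add_cancel, exp_zero] at h
    simp only [Pi.zero_apply]
    linarith
  have hg_mono : MonotoneOn g (Set.Ici 0) := by
    refine monotoneOn_of_hasDerivWithinAt_nonneg (convex_Ici 0)
      (fun y _ => (hg y).continuousAt.continuousWithinAt) (fun y _ => (hg y).hasDerivWithinAt)
      fun y hy => ?_
    rw [interior_Ici] at hy
    simpa [g'] using hg'_mono (le_of_lt hy)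
  simpa [g] using hg_mono Set.self_mem_Ici hx hx

lemma exp_le_one_add_add_sq_div_of_le {x c : ℝ} (hxc : x ≤ c) (hc0 : 0 ≤ c) (hc3 : c < 3) :
    exp x ≤ 1 + x + x ^ 2 / (2 * (1 - c / 3)) := by
  have hpos : 0 < 1 - c / 3 := by linarith
  rcases le_or_gt x 0 with hx | hx
  · have : x ^ 2 / 2 ≤ x ^ 2 / (2 * (1 - c / 3)) :=
      div_le_div_of_nonneg_left (sq_nonneg x) (by positivity) (by linarith)
    linarith [exp_le_quadratic_of_nonpos hx]
  · have hrem : 0 ≤ exp x - 1 - x := by linarith [add_one_le_exp x]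
    have : (1 - c / 3) * (exp x - 1 - x) ≤ x ^ 2 / 2 :=
      (mul_le_mul_of_nonneg_right (by linarith) hrem).trans
        (one_sub_div_three_mul_exp_sub_le hx.le)
    rw [← sub_le_iff_le_add', le_div_iff₀ (by positivity)]
    linarith

lemma hasSum_div_succ_mul_succ (δ : ℝ) :
    HasSum (fun k : ℕ => δ / ((k + 1) * (k + 2))) δ := by
  suffices h : HasSum (fun k : ℕ => 1 / ((k + 1) * (k + 2) : ℝ)) 1 by
    simpa only [mul_one_div, mul_one] using h.mul_left δ
  rw [hasSum_iff_tendsto_nat_of_nonneg (fun k => by positivity)]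
  have htelescope : ∀ N : ℕ, ∑ k ∈ range N, 1 / ((k + 1) * (k + 2) : ℝ) = 1 - 1 / (N + 1) := by
    intro N
    have hterm : ∀ k : ℕ, 1 / ((k + 1) * (k + 2) : ℝ) = 1 / (k + 1) - 1 / ((k + 1 : ℕ) + 1) := by
      intro k
      push_cast
      field_simp
      ring
    simp_rw [hterm, sum_range_sub' (fun k : ℕ => 1 / ((k : ℝ) + 1))]
    simp
  simp_rw [htelescope]
  simpa using (tendsto_one_div_add_atTop_nhds_zero_nat (𝕜 := ℝ)).const_sub 1

lemma measure_iUnion_le_ofReal_of_le_div_succ_mul_succ {Ω : Type*} [MeasurableSpace Ω]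
    {μ : Measure Ω} {E : ℕ → Set Ω} {δ : ℝ} (hδ : 0 ≤ δ)
    (hE : ∀ k : ℕ, μ (E k) ≤ ENNReal.ofReal (δ / ((k + 1) * (k + 2)))) :
    μ (⋃ k, E k) ≤ ENNReal.ofReal δ :=
  calc μ (⋃ k, E k) ≤ ∑' k, μ (E k) := measure_iUnion_le E
    _ ≤ ∑' k : ℕ, ENNReal.ofReal (δ / ((k + 1) * (k + 2))) := ENNReal.tsum_le_tsum hE
    _ = ENNReal.ofReal δ := by
      rw [← ENNReal.ofReal_tsum_of_nonneg (fun k => by positivity)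
        (hasSum_div_succ_mul_succ δ).summable, (hasSum_div_succ_mul_succ δ).tsum_eq]

lemma integrable_exp_mul_of_ae_le {Ω : Type*} [MeasurableSpace Ω] {μ : Measure Ω}
    [IsFiniteMeasure μ] {Y : Ω → ℝ} {B t : ℝ} (hY : AEMeasurable Y μ) (ht : 0 ≤ t)
    (hbound : ∀ᵐ ω ∂μ, Y ω ≤ B) : Integrable (fun ω => exp (t * Y ω)) μ :=
  .of_bound (by fun_prop) (exp (t * B)) <| hbound.mono fun ω h => by
    rw [norm_of_nonneg (exp_pos _).le, exp_le_exp]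
    exact mul_le_mul_of_nonneg_left h ht

section Bernstein

variable {Ω : Type*} [MeasurableSpace Ω] {μ : Measure Ω} [IsProbabilityMeasure μ]

lemma mgf_le_exp_bernstein {Y : Ω → ℝ} {B v t : ℝ} (hY : AEMeasurable Y μ)
    (hbound : ∀ᵐ ω ∂μ, |Y ω| ≤ B) (hmean : μ[Y] = 0) (hvar : Var[Y; μ] ≤ v)
    (ht : 0 ≤ t) (htB : t * B < 3) :
    mgf Y μ t ≤ exp (t ^ 2 * v / (2 * (1 - t * B / 3))) := by
  obtain ⟨ω₀, hω₀⟩ := hbound.exists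
  have hmemLp : MemLp Y 2 μ :=
    memLp_of_bounded (hbound.mono fun ω h => abs_le.mp h) hY.aestronglyMeasurable 2
  have hexp_int :=
    integrable_exp_mul_of_ae_le hY ht (hbound.mono fun ω h => (le_abs_self _).trans h)
  have hlin_int : Integrable (fun ω => 1 + t * Y ω) μ :=
    (integrable_const 1).add ((hmemLp.integrable one_le_two).const_mul t)
  have hsq_int : Integrable (fun ω => t ^ 2 / (2 * (1 - t * B / 3)) * Y ω ^ 2) μ :=
    hmemLp.integrable_sq.const_mul _
  calc mgf Y μ t = ∫ ω, exp (t * Y ω) ∂μ := rfl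
    _ ≤ ∫ ω, (1 + t * Y ω + t ^ 2 / (2 * (1 - t * B / 3)) * Y ω ^ 2) ∂μ := by
      refine integral_mono_ae hexp_int (hlin_int.add hsq_int) (hbound.mono fun ω h => ?_)
      refine (exp_le_one_add_add_sq_div_of_le (x := t * Y ω) (c := t * B)
        (mul_le_mul_of_nonneg_left (le_abs_self _ |>.trans h) ht)
        (mul_nonneg ht ((abs_nonneg _).trans hω₀)) htB).trans_eq ?_
      ring
    _ = 1 + t ^ 2 / (2 * (1 - t * B / 3)) * Var[Y; μ] := by
      rw [integral_add hlin_int hsq_int, integral_add (integrable_const 1)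
          ((hmemLp.integrable one_le_two).const_mul t), integral_const_mul, integral_const_mul,
        variance_of_integral_eq_zero hY hmean, hmean]
      simp
    _ ≤ 1 + t ^ 2 * v / (2 * (1 - t * B / 3)) := by
      rw [div_mul_eq_mul_div]
      gcongr
      linarith
    _ ≤ exp (t ^ 2 * v / (2 * (1 - t * B / 3))) := by
      linarith [add_one_le_exp (t ^ 2 * v / (2 * (1 - t * B / 3)))]

lemma exists_bernstein_exponent {w B L : ℝ} (hw : 0 ≤ w) (hB : 0 < B) (hL : 0 < L) :
    ∃ t, 0 ≤ t ∧ t * B < 3 ∧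
      -t * (√(2 * w * L) + 2 / 3 * B * L) + t ^ 2 * w / (2 * (1 - t * B / 3)) ≤ -L := by
  have hs0 := sqrt_nonneg (2 * w * L)
  have hs : √(2 * w * L) ^ 2 = 2 * w * L := sq_sqrt (by positivity)
  generalize √(2 * w * L) = s at hs0 hs ⊢
  have hr : 0 < s + 2 / 3 * B * L := by positivity
  generalize hr_def : s + 2 / 3 * B * L = r at hr ⊢
  have hq : 0 < w + 2 / 3 * B * r := by positivity
  have hp : 0 < w + B * r / 3 := by positivity
  -- `t = r / (w + 2 B r / 3)` minimises the exponent; its value there is `-r² / (2 (w + B r / 3))`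
  refine ⟨r / (w + 2 / 3 * B * r), by positivity, ?_, ?_⟩
  · rw [div_mul_eq_mul_div, div_lt_iff₀ hq]
    nlinarith
  · have key : -(r / (w + 2 / 3 * B * r)) * r + (r / (w + 2 / 3 * B * r)) ^ 2 * w /
        (2 * (1 - r / (w + 2 / 3 * B * r) * B / 3)) = -(r ^ 2 / (2 * (w + B * r / 3))) := by
      have : 1 - r / (w + 2 / 3 * B * r) * B / 3 = (w + B * r / 3) / (w + 2 / 3 * B * r) := by
        field_simp
        ring
      rw [this]
      field_simp
      ring
    rw [key, neg_le_neg_iff, le_div_iff₀ (by positivity)]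
    subst hr_def
    nlinarith [mul_nonneg (mul_nonneg hB.le hL.le) hs0]

theorem measure_sum_ge_le_exp_bernstein {ι : Type*} {Y : ι → Ω → ℝ} {s : Finset ι}
    {B v L : ℝ} (hindep : iIndepFun Y μ) (hmeas : ∀ i, Measurable (Y i)) (hB : 0 < B) (hL : 0 < L)
    (hbound : ∀ i ∈ s, ∀ᵐ ω ∂μ, |Y i ω| ≤ B) (hmean : ∀ i ∈ s, μ[Y i] = 0)
    (hvar : ∀ i ∈ s, Var[Y i; μ] ≤ v) :
    μ {ω | √(2 * #s * v * L) + 2 / 3 * B * L ≤ ∑ i ∈ s, Y i ω} ≤ ENNReal.ofReal (exp (-L)) := by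
  have hw : 0 ≤ (#s : ℝ) * v := by
    rcases s.eq_empty_or_nonempty with rfl | ⟨i, hi⟩
    · simp
    · exact mul_nonneg (by positivity) ((variance_nonneg _ _).trans (hvar i hi))
  obtain ⟨t, ht, htB, hexp⟩ := exists_bernstein_exponent hw hB hL
  rw [← mul_assoc 2] at hexp
  set r := √(2 * #s * v * L) + 2 / 3 * B * L
  have hint : ∀ i ∈ s, Integrable (fun ω => exp (t * Y i ω)) μ := fun i hi =>
    integrable_exp_mul_of_ae_le (hmeas i).aemeasurable ht
      ((hbound i hi).mono fun ω h => (le_abs_self _).trans h)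
  have hmgf : mgf (∑ i ∈ s, Y i) μ t ≤ exp (t ^ 2 * (#s * v) / (2 * (1 - t * B / 3))) := by
    rw [hindep.mgf_sum hmeas]
    calc ∏ i ∈ s, mgf (Y i) μ t ≤ ∏ _i ∈ s, exp (t ^ 2 * v / (2 * (1 - t * B / 3))) :=
          prod_le_prod (fun i _ => mgf_nonneg) fun i hi => mgf_le_exp_bernstein
            (hmeas i).aemeasurable (hbound i hi) (hmean i hi) (hvar i hi) ht htB
      _ = _ := by
        rw [prod_const, ← exp_nat_mul]
        congr 1
        ring
  have hchernoff := measure_ge_le_exp_mul_mgf r ht (hindep.integrable_exp_mul_sum hmeas hint)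
  rw [← ENNReal.ofReal_toReal (measure_ne_top μ _)]
  refine ENNReal.ofReal_le_ofReal ?_
  calc (μ {ω | r ≤ ∑ i ∈ s, Y i ω}).toReal = μ.real {ω | r ≤ (∑ i ∈ s, Y i) ω} := by
        simp [measureReal_def, Finset.sum_apply]
    _ ≤ exp (-t * r) * mgf (∑ i ∈ s, Y i) μ t := hchernoff
    _ ≤ exp (-t * r) * exp (t ^ 2 * (#s * v) / (2 * (1 - t * B / 3))) := by gcongr
    _ ≤ exp (-L) := by
      rw [← exp_add, exp_le_exp]
      linarith

theorem measure_abs_sum_ge_le_two_mul_exp_bernstein {ι : Type*} {Y : ι → Ω → ℝ} {s : Finset ι}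
    {B v L : ℝ} (hindep : iIndepFun Y μ) (hmeas : ∀ i, Measurable (Y i)) (hB : 0 < B)
    (hL : 0 < L) (hbound : ∀ i ∈ s, ∀ᵐ ω ∂μ, |Y i ω| ≤ B) (hmean : ∀ i ∈ s, μ[Y i] = 0)
    (hvar : ∀ i ∈ s, Var[Y i; μ] ≤ v) :
    μ {ω | √(2 * #s * v * L) + 2 / 3 * B * L ≤ |∑ i ∈ s, Y i ω|} ≤
      ENNReal.ofReal (2 * exp (-L)) := by
  have hupper := measure_sum_ge_le_exp_bernstein hindep hmeas hB hL hbound hmean hvar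
  have hlower := measure_sum_ge_le_exp_bernstein (Y := fun i ω => -Y i ω)
    (hindep.comp (fun _ x => -x) fun _ => measurable_neg) (fun i => (hmeas i).neg) hB hL
    (by simpa only [abs_neg] using hbound)
    (fun i hi => by rw [integral_neg, hmean i hi, neg_zero])
    (fun i hi => variance_fun_neg.trans_le (hvar i hi))
  calc _ ≤ μ ({ω | √(2 * #s * v * L) + 2 / 3 * B * L ≤ ∑ i ∈ s, Y i ω} ∪
          {ω | √(2 * #s * v * L) + 2 / 3 * B * L ≤ ∑ i ∈ s, -Y i ω}) := by
        refine measure_mono fun ω hω => ?_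
        simpa only [Set.mem_union, Set.mem_ofPred_eq, sum_neg_distrib] using le_abs.mp hω
    _ ≤ ENNReal.ofReal (exp (-L)) + ENNReal.ofReal (exp (-L)) :=
        (measure_union_le _ _).trans (add_le_add hupper hlower)
    _ = ENNReal.ofReal (2 * exp (-L)) := by
        rw [← ENNReal.ofReal_add (exp_pos _).le (exp_pos _).le, two_mul]

lemma one_sub_le_measure_of_measure_compl_le {s : Set Ω} {ε : ENNReal} (h : μ sᶜ ≤ ε) :
    1 - ε ≤ μ s := by
  rw [tsub_le_iff_right, ← measure_univ (μ := μ)]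
  exact (measure_univ_le_add_compl s).trans (by gcongr)

theorem measure_exists_abs_sum_ge_le_anytime_bernstein {Y : ℕ → Ω → ℝ} {B v δ : ℝ}
    (hindep : iIndepFun Y μ) (hmeas : ∀ i, Measurable (Y i)) (hB : 0 < B) (hδ : 0 < δ)
    (hbound : ∀ i, ∀ᵐ ω ∂μ, |Y i ω| ≤ B) (hmean : ∀ i, μ[Y i] = 0)
    (hvar : ∀ i, Var[Y i; μ] ≤ v) :
    μ {ω | ∃ n : ℕ, 1 ≤ n ∧ √(2 * n * v * log (2 * n * (n + 1) / δ)) +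
      2 / 3 * B * log (2 * n * (n + 1) / δ) ≤ |∑ i ∈ Icc 1 n, Y i ω|} ≤ ENNReal.ofReal δ := by
  rcases le_or_gt 1 δ with hδ1 | hδ1
  · exact prob_le_one.trans (by simpa using ENNReal.ofReal_le_ofReal hδ1)
  set E : ℕ → Set Ω := fun n => {ω | √(2 * n * v * log (2 * n * (n + 1) / δ)) +
    2 / 3 * B * log (2 * n * (n + 1) / δ) ≤ |∑ i ∈ Icc 1 n, Y i ω|}
  have hsub : {ω | ∃ n : ℕ, 1 ≤ n ∧ ω ∈ E n} ⊆ ⋃ k, E (k + 1) := by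
    rintro ω ⟨n, hn, hω⟩
    obtain ⟨k, rfl⟩ := Nat.exists_eq_add_of_le' hn
    exact Set.mem_iUnion.mpr ⟨k, hω⟩
  refine (measure_mono hsub).trans
    (measure_iUnion_le_ofReal_of_le_div_succ_mul_succ hδ.le fun k => ?_)
  have hL : 0 < log (2 * (k + 1 : ℕ) * ((k + 1 : ℕ) + 1) / δ) :=
    log_pos ((one_lt_div hδ).mpr (by push_cast; nlinarith))
  have htail := measure_abs_sum_ge_le_two_mul_exp_bernstein (s := Icc 1 (k + 1)) hindep hmeas hB
    hL (fun i _ => hbound i) (fun i _ => hmean i) (fun i _ => hvar i)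
  rw [Nat.card_Icc, Nat.add_sub_cancel] at htail
  refine htail.trans_eq ?_
  rw [exp_neg, exp_log (by positivity), inv_div]
  push_cast
  congr 1
  field_simp
  ring

lemma variance_le_mul_integral_of_mem_Icc {X : Ω → ℝ} {B : ℝ} (hX : AEMeasurable X μ)
    (hbound : ∀ᵐ ω ∂μ, X ω ∈ Set.Icc 0 B) : Var[X; μ] ≤ B * μ[X] := by
  have hmean : 0 ≤ μ[X] := integral_nonneg_of_ae (hbound.mono fun ω hω => hω.1)
  nlinarith [variance_le_sub_mul_sub hbound hX]

end Bernstein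

lemma le_two_mul_sqrt_add_of_le_two_mul_sqrt_add {a S D K : ℝ} (ha : 0 ≤ a) (hS : 0 ≤ S)
    (hK : 0 ≤ K) (h : D ≤ 2 * a * √(S + D) + K * a ^ 2) :
    D ≤ 2 * a * √S + (2 * K + 4) * a ^ 2 := by
  by_contra! hlt
  have hau : 0 ≤ 2 * a * √S := by positivity
  have hD : 0 < D := by nlinarith
  have hu : (2 * a * √S) ^ 2 = 4 * a ^ 2 * S := by rw [mul_pow, sq_sqrt hS]; ring
  have ht : (2 * a * √(S + D)) ^ 2 = 4 * a ^ 2 * (S + D) := by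
    rw [mul_pow, sq_sqrt (by linarith)]; ring
  have hsq : (D - K * a ^ 2) ^ 2 ≤ (2 * a * √(S + D)) ^ 2 :=
    pow_le_pow_left₀ (by nlinarith) (by linarith) 2
  -- so `D² ≤ (2K + 4) a² D + 4 a² S`, which the lower bound on `D` contradicts
  have hlower := mul_lt_mul_of_pos_left hlt hD
  have hcross := mul_le_mul_of_nonneg_right (show 2 * a * √S ≤ D by nlinarith) hau
  nlinarith [sq_nonneg (K * a ^ 2)]

lemma abs_sub_le_of_abs_sub_le_bernstein {S n m B L ℓ : ℝ} (hS : 0 ≤ S) (hn : 0 ≤ n)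
    (hm : 0 ≤ m) (hB : 0 ≤ B) (hℓ : 0 ≤ ℓ) (hL : L ≤ 2 * ℓ)
    (h : |S - n * m| ≤ √(2 * n * (B * m) * L) + 2 / 3 * B * L) :
    |S - n * m| ≤ 2 * √(B * S * ℓ) + 7 * B * ℓ := by
  have ha : √(B * ℓ) ^ 2 = B * ℓ := sq_sqrt (by positivity)
  have hsqrt : √(2 * n * (B * m) * L) ≤ 2 * √(B * ℓ) * √(S + |S - n * m|) := by
    calc √(2 * n * (B * m) * L) ≤ √(2 ^ 2 * (B * ℓ) * (S + |S - n * m|)) := by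
          refine sqrt_le_sqrt ?_
          have hnm := neg_abs_le (S - n * m)
          have hL' : 2 * n * (B * m) * L ≤ 2 * n * (B * m) * (2 * ℓ) := by gcongr
          nlinarith [mul_nonneg (mul_nonneg hn hm) (mul_nonneg hB hℓ)]
      _ = 2 * √(B * ℓ) * √(S + |S - n * m|) := by
          rw [sqrt_mul' _ (by positivity), sqrt_mul' _ (by positivity), sqrt_sq zero_le_two]
  have habsorb := le_two_mul_sqrt_add_of_le_two_mul_sqrt_add (sqrt_nonneg (B * ℓ)) hS
    (by norm_num : (0 : ℝ) ≤ 4 / 3) (D := |S - n * m|) (by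
      rw [ha]
      nlinarith [mul_le_mul_of_nonneg_left hL hB])
  rw [ha, mul_assoc 2, ← sqrt_mul (by positivity), mul_right_comm B ℓ S] at habsorb
  nlinarith [mul_nonneg hB hℓ]

lemma log_two_mul_mul_succ_div_le {n δ : ℝ} (hn : 1 ≤ n) (hδ0 : 0 < δ) (hδ1 : δ ≤ 1) :
    log (2 * n * (n + 1) / δ) ≤ 2 * log (2 * n / δ) := by
  rw [show 2 * log (2 * n / δ) = log ((2 * n / δ) ^ 2) by rw [log_pow]; norm_num]
  refine log_le_log (by positivity) ?_
  rw [div_pow, div_le_div_iff₀ hδ0 (by positivity)]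
  have : (n + 1) * δ ≤ 2 * n := by nlinarith
  nlinarith [mul_le_mul_of_nonneg_left this (by positivity : (0 : ℝ) ≤ 2 * n * δ)]

/-- Anytime Bernstein inequality, empirical form (Lemma B.3): for i.i.d. `X_i ∈ [0,B]` with
mean `m`, with probability at least `1 - δ`, simultaneously for all `n ≥ 1`,
`|∑_{i=1}^n (X_i - m)| ≤ 2√(B (∑_{i=1}^n X_i) ln(2n/δ)) + 7 B ln(2n/δ)`. -/
theorem anytime_bernstein_empirical
    {Ω : Type*} {m0 : MeasurableSpace Ω} {μ : Measure Ω} [IsProbabilityMeasure μ]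
    (X : ℕ → Ω → ℝ) (B : ℝ) (hB : 0 < B)
    (hmeas : ∀ i, Measurable (X i))
    (hindep : iIndepFun X μ)
    (hident : ∀ i, IdentDistrib (X i) (X 1) μ μ)
    (hbound : ∀ i, ∀ᵐ ω ∂μ, X i ω ∈ Set.Icc (0 : ℝ) B)
    (m : ℝ) (hm : m = ∫ ω, X 1 ω ∂μ)
    (δ : ℝ) (hδ0 : 0 < δ) (hδ1 : δ < 1) :
    ENNReal.ofReal (1 - δ) ≤
      μ {ω | ∀ n : ℕ, 1 ≤ n →
        |∑ i ∈ Finset.Icc 1 n, (X i ω - m)| ≤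
          2 * Real.sqrt (B * (∑ i ∈ Finset.Icc 1 n, X i ω) * Real.log (2 * n / δ)) +
            7 * B * Real.log (2 * n / δ)} := by
  have hint : ∀ i, Integrable (X i) μ := fun i =>
    (memLp_of_bounded (hbound i) (hmeas i).aestronglyMeasurable 1).integrable le_rfl
  have hmean : ∀ i, μ[X i] = m := fun i => hm ▸ (hident i).integral_eq
  have hm_mem : m ∈ Set.Icc 0 B :=
    hm ▸ (convex_Icc 0 B).integral_mem isClosed_Icc (hbound 1) (hint 1)
  have hbad := measure_exists_abs_sum_ge_le_anytime_bernstein (Y := fun i ω => X i ω - m)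
    (v := B * m) (hindep.comp _ fun _ => measurable_id.sub_const m)
    (fun i => (hmeas i).sub_const m) hB hδ0
    (fun i => (hbound i).mono fun ω hω => by
      simpa [Real.dist_eq] using Real.dist_le_of_mem_Icc hω hm_mem)
    (fun i => by rw [integral_sub (hint i) (integrable_const m), hmean i]; simp)
    (fun i => by
      rw [variance_sub_const (hmeas i).aestronglyMeasurable, (hident i).variance_eq, hm]
      exact variance_le_mul_integral_of_mem_Icc (hmeas 1).aemeasurable (hbound 1))
  rw [ENNReal.ofReal_sub _ hδ0.le, ENNReal.ofReal_one]
  refine one_sub_le_measure_of_measure_compl_le ((measure_mono_ae ?_).trans hbad)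
  filter_upwards [ae_all_iff.mpr hbound] with ω hX hG
  by_contra hω
  refine hG fun n hn => ?_
  have hn' : (1 : ℝ) ≤ n := by exact_mod_cast hn
  have hℓ : 0 ≤ log (2 * n / δ) := log_nonneg ((one_le_div hδ0).mpr (by linarith))
  rw [sum_sub_distrib, sum_const, Nat.card_Icc, Nat.add_sub_cancel, nsmul_eq_mul]
  exact abs_sub_le_of_abs_sub_le_bernstein (sum_nonneg fun i _ => (hX i).1) n.cast_nonneg
    hm_mem.1 hB.le hℓ (log_two_mul_mul_succ_div_le hn' hδ0 hδ1.le)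
    (le_of_not_ge fun h => hω ⟨n, hn, by simpa [sum_sub_distrib] using h⟩)
end

section
/- Lemma B.5 of the paper: Let (X_i)_{i≥1} be a sequence of real random variables adapted to a filtration 𝓕₀ ⊆ 𝓕₁ ⊆ ⋯, with 0 ≤ X_i ≤ B almost surely for every i, for a fixed constant B > 0. Then for every δ ∈ (0,1), with probability at least 1 − δ, simultaneously for all n ≥ 1: Σ_{i=1}^n E[X_i | 𝓕_{i−1}] ≤ 2·Σ_{i=1}^n X_i + 4B·ln(2n/δ). -/
/-!
The process `W n = exp (∑_{i ≤ n} (E[X_i | 𝓕_{i-1}] / (2B) - (log 2 / B) X_i))` is a positive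
supermartingale with `W 0 = 1`: on `[0, B]` convexity gives
`exp (-(log 2 / B) y) ≤ 1 - y / (2B) ≤ exp (-y / (2B))`, which absorbs the compensator factor of
each step. Since `log 2 < 1`, a violation of the inequality at time `n` forces
`W n ≥ (2n/δ)²`, an event of probability at most `δ² / (4n²)` by Markov's inequality; these
bounds sum to `δ² π² / 24 ≤ δ`.
-/

open MeasureTheory Finset

namespace Real

theorem exp_mul_le_one_add_mul_exp_sub_one (x : ℝ) {t : ℝ} (ht0 : 0 ≤ t) (ht1 : t ≤ 1) :
    exp (t * x) ≤ 1 + t * (exp x - 1) := by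
  have := convexOn_exp.2 (Set.mem_univ 0) (Set.mem_univ x) (sub_nonneg.2 ht1) ht0 (by ring)
  simp only [smul_eq_mul, mul_zero, zero_add, exp_zero, mul_one] at this
  linarith

theorem exp_neg_log_two_div_mul_le {B y : ℝ} (hB : 0 < B) (hy : y ∈ Set.Icc 0 B) :
    exp (-(log 2 / B * y)) ≤ 1 - (2 * B)⁻¹ * y := by
  have key := exp_mul_le_one_add_mul_exp_sub_one (-log 2) (div_nonneg hy.1 hB.le)
    ((div_le_one hB).2 hy.2)
  rw [exp_neg, exp_log two_pos] at key
  convert key using 2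
  · field_simp
  · field_simp; ring

end Real

section

variable {Ω : Type*} {m m0 : MeasurableSpace Ω} {μ : Measure Ω} {f : Ω → ℝ}

-- At `n = 0` the bound reads `ofReal (1 / 0) = 0`, matching the `n = 0` term of `hasSum_zeta_two`.
theorem measure_iUnion_le_of_le_inv_sq {A : ℕ → Set Ω} {δ : ℝ} (hδ0 : 0 ≤ δ) (hδ1 : δ ≤ 1)
    (hA : ∀ n, μ (A n) ≤ ENNReal.ofReal (1 / (2 * n / δ) ^ 2)) :
    μ (⋃ n, A n) ≤ ENNReal.ofReal δ := by
  have hsum : HasSum (fun n : ℕ ↦ 1 / (2 * n / δ) ^ 2) (δ ^ 2 / 4 * (Real.pi ^ 2 / 6)) := by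
    refine (hasSum_zeta_two.mul_left (δ ^ 2 / 4)).congr_fun fun n ↦ ?_
    rw [div_pow, mul_pow, one_div_div]
    ring
  calc μ (⋃ n, A n) ≤ ∑' n, μ (A n) := measure_iUnion_le A
    _ ≤ ∑' n : ℕ, ENNReal.ofReal (1 / (2 * n / δ) ^ 2) := ENNReal.tsum_le_tsum hA
    _ = ENNReal.ofReal (δ ^ 2 / 4 * (Real.pi ^ 2 / 6)) := by
        rw [← ENNReal.ofReal_tsum_of_nonneg (fun n ↦ by positivity) hsum.summable, hsum.tsum_eq]
    _ ≤ ENNReal.ofReal δ := by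
        refine ENNReal.ofReal_le_ofReal ?_
        have hpi : Real.pi ^ 2 ≤ 16 := by nlinarith [Real.pi_le_four, Real.pi_pos]
        nlinarith

theorem ofReal_one_sub_le_of_measure_compl_le [IsProbabilityMeasure μ] {s : Set Ω} {δ : ℝ}
    (hδ : 0 ≤ δ) (h : μ sᶜ ≤ ENNReal.ofReal δ) : ENNReal.ofReal (1 - δ) ≤ μ s := by
  rw [ENNReal.ofReal_sub _ hδ, ENNReal.ofReal_one, tsub_le_iff_right]
  calc 1 = μ Set.univ := measure_univ.symm
    _ ≤ μ s + μ sᶜ := measure_univ_le_add_compl s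
    _ ≤ μ s + ENNReal.ofReal δ := by gcongr

variable [IsFiniteMeasure μ]

theorem integrable_of_ae_mem_Icc {a b : ℝ} (hf : AEStronglyMeasurable f μ)
    (hab : ∀ᵐ ω ∂μ, f ω ∈ Set.Icc a b) : Integrable f μ :=
  .of_bound hf (max |a| |b|) <| by
    filter_upwards [hab] with ω hω using abs_le_max_abs_abs hω.1 hω.2

theorem integrable_exp_neg_mul {c : ℝ} (hc : 0 ≤ c) (hf : AEStronglyMeasurable f μ)
    (hf0 : 0 ≤ᵐ[μ] f) : Integrable (fun ω ↦ Real.exp (-(c * f ω))) μ := by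
  refine integrable_of_ae_mem_Icc (a := 0) (b := 1)
    (Real.continuous_exp.comp_aestronglyMeasurable (hf.const_mul c).neg) ?_
  filter_upwards [hf0] with ω hω
  exact ⟨(Real.exp_pos _).le, Real.exp_le_one_iff.2 <| neg_nonpos.2 <| mul_nonneg hc hω⟩

theorem condExp_ae_mem_Icc (hm : m ≤ m0) {a b : ℝ} (hf : Integrable f μ)
    (hab : ∀ᵐ ω ∂μ, f ω ∈ Set.Icc a b) : ∀ᵐ ω ∂μ, μ[f | m] ω ∈ Set.Icc a b := by
  have hlow : μ[fun _ ↦ a | m] ≤ᵐ[μ] μ[f | m] :=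
    condExp_mono (integrable_const a) hf (by filter_upwards [hab] with ω hω using hω.1)
  have hup : μ[f | m] ≤ᵐ[μ] μ[fun _ ↦ b | m] :=
    condExp_mono hf (integrable_const b) (by filter_upwards [hab] with ω hω using hω.2)
  rw [condExp_const hm] at hlow hup
  filter_upwards [hlow, hup] with ω h₁ h₂ using ⟨h₁, h₂⟩

theorem condExp_exp_neg_log_two_div_mul_le (hm : m ≤ m0) {B : ℝ} (hB : 0 < B)
    (hf : AEStronglyMeasurable f μ) (hfB : ∀ᵐ ω ∂μ, f ω ∈ Set.Icc 0 B) :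
    μ[fun ω ↦ Real.exp (-(Real.log 2 / B * f ω)) | m]
      ≤ᵐ[μ] fun ω ↦ Real.exp (-((2 * B)⁻¹ * μ[f | m] ω)) := by
  have hf_int := integrable_of_ae_mem_Icc hf hfB
  have hexp_int := integrable_exp_neg_mul (div_nonneg (Real.log_nonneg one_le_two) hB.le) hf
    (by filter_upwards [hfB] with ω hω using hω.1)
  let T : ℝ →L[ℝ] ℝ := -(2 * B)⁻¹ • ContinuousLinearMap.id ℝ ℝ
  have hchord : μ[fun ω ↦ Real.exp (-(Real.log 2 / B * f ω)) | m]
      ≤ᵐ[μ] μ[fun ω ↦ T (f ω) + 1 | m] :=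
    condExp_mono hexp_int ((T.integrable_comp hf_int).add (integrable_const 1)) <| by
      filter_upwards [hfB] with ω hω
      simpa [T, sub_eq_neg_add] using Real.exp_neg_log_two_div_mul_le hB hω
  filter_upwards [hchord, T.comp_condExp_add_const_comm hm hf_int 1] with ω h₁ h₂
  rw [← h₂] at h₁
  simp only [T, smul_apply, ContinuousLinearMap.id_apply, smul_eq_mul] at h₁
  linarith [Real.add_one_le_exp (-((2 * B)⁻¹ * μ[f | m] ω))]

theorem measure_ge_le_ofReal_div_of_integral_le {C ε : ℝ} (hf : 0 ≤ᵐ[μ] f)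
    (hf_int : Integrable f μ) (hC : ∫ ω, f ω ∂μ ≤ C) (hε : 0 < ε) :
    μ {ω | ε ≤ f ω} ≤ ENNReal.ofReal (C / ε) := by
  rw [← ENNReal.ofReal_toReal (measure_ne_top μ _)]
  refine ENNReal.ofReal_le_ofReal ((le_div_iff₀ hε).2 ?_)
  rw [mul_comm]
  exact (mul_meas_ge_le_integral_of_nonneg hf hf_int ε).trans hC

end

section

variable {Ω : Type*} {m0 : MeasurableSpace Ω}

noncomputable def compensatedExp (μ : Measure Ω) (ℱ : Filtration ℕ m0) (X : ℕ → Ω → ℝ) (B : ℝ)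
    (n : ℕ) (ω : Ω) : ℝ :=
  Real.exp (∑ i ∈ Icc 1 n, ((2 * B)⁻¹ * μ[X i | ℱ (i - 1)] ω - Real.log 2 / B * X i ω))

variable {μ : Measure Ω} {ℱ : Filtration ℕ m0} {X : ℕ → Ω → ℝ} {B : ℝ}

theorem compensatedExp_pos (n : ℕ) (ω : Ω) : 0 < compensatedExp μ ℱ X B n ω :=
  Real.exp_pos _

theorem compensatedExp_zero : compensatedExp μ ℱ X B 0 = 1 := by
  ext; simp [compensatedExp]

theorem compensatedExp_succ (n : ℕ) (ω : Ω) :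
    compensatedExp μ ℱ X B (n + 1) ω = compensatedExp μ ℱ X B n ω *
      Real.exp ((2 * B)⁻¹ * μ[X (n + 1) | ℱ n] ω) *
      Real.exp (-(Real.log 2 / B * X (n + 1) ω)) := by
  rw [compensatedExp, compensatedExp, sum_Icc_succ_top (Nat.le_add_left 1 n), Nat.add_sub_cancel,
    sub_eq_add_neg ((2 * B)⁻¹ * _), Real.exp_add, Real.exp_add, mul_assoc]

theorem stronglyAdapted_compensatedExp (hX : ∀ i, 1 ≤ i → StronglyMeasurable[ℱ i] (X i)) :
    StronglyAdapted ℱ (compensatedExp μ ℱ X B) := by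
  intro n
  refine (Measurable.exp <| Finset.measurable_sum _ fun i hi ↦ ?_).stronglyMeasurable
  obtain ⟨hi1, hin⟩ := mem_Icc.1 hi
  exact ((stronglyMeasurable_condExp.mono (ℱ.mono (by omega))).measurable.const_mul _).sub
    (((hX i hi1).mono (ℱ.mono hin)).measurable.const_mul _)

theorem compensatedExp_le_exp (hB : 0 < B) {n : ℕ} {ω : Ω} (hX : ∀ i ∈ Icc 1 n, 0 ≤ X i ω)
    (hCE : ∀ i ∈ Icc 1 n, μ[X i | ℱ (i - 1)] ω ≤ B) :
    compensatedExp μ ℱ X B n ω ≤ Real.exp (n / 2) := by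
  refine Real.exp_le_exp.2 ((sum_le_card_nsmul _ _ (1 / 2) fun i hi ↦ ?_).trans_eq ?_)
  · have h₁ : (2 * B)⁻¹ * μ[X i | ℱ (i - 1)] ω ≤ (2 * B)⁻¹ * B :=
      mul_le_mul_of_nonneg_left (hCE i hi) (by positivity)
    have h₂ : 0 ≤ Real.log 2 / B * X i ω :=
      mul_nonneg (div_nonneg (Real.log_nonneg one_le_two) hB.le) (hX i hi)
    have h₃ : (2 * B)⁻¹ * B = 1 / 2 := by field_simp
    linarith
  · simp only [Nat.card_Icc, add_tsub_cancel_right, one_div, nsmul_eq_mul]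
    ring

theorem sq_le_compensatedExp_of_lt {x : ℝ} (hB : 0 < B) (hx : 0 < x) {n : ℕ} {ω : Ω}
    (hX : ∀ i ∈ Icc 1 n, 0 ≤ X i ω)
    (h : 2 * ∑ i ∈ Icc 1 n, X i ω + 4 * B * Real.log x < ∑ i ∈ Icc 1 n, μ[X i | ℱ (i - 1)] ω) :
    x ^ 2 ≤ compensatedExp μ ℱ X B n ω := by
  set S := ∑ i ∈ Icc 1 n, μ[X i | ℱ (i - 1)] ω
  set T := ∑ i ∈ Icc 1 n, X i ω
  have hT : 0 ≤ T := sum_nonneg hX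
  have hexponent : ∑ i ∈ Icc 1 n, ((2 * B)⁻¹ * μ[X i | ℱ (i - 1)] ω - Real.log 2 / B * X i ω)
      = (2 * B)⁻¹ * S - Real.log 2 / B * T := by
    rw [sum_sub_distrib, mul_sum, mul_sum]
  have hlog2 : Real.log 2 / B * T ≤ T / B := by
    rw [div_mul_eq_mul_div]
    gcongr
    exact mul_le_of_le_one_left hT (Real.log_two_lt_d9.le.trans (by norm_num))
  have hS : T / B + 2 * Real.log x < (2 * B)⁻¹ * S := by
    have hscaled : (2 * B)⁻¹ * (2 * T + 4 * B * Real.log x) = T / B + 2 * Real.log x := by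
      field_simp
      ring
    exact hscaled ▸ mul_lt_mul_of_pos_left h (inv_pos.2 (mul_pos two_pos hB))
  calc x ^ 2 = Real.exp (2 * Real.log x) := by
        rw [← Real.log_rpow hx, Real.exp_log (by positivity), Real.rpow_two]
    _ ≤ compensatedExp μ ℱ X B n ω := by
        rw [compensatedExp, hexponent]
        exact Real.exp_le_exp.2 (by linarith)

theorem integrable_compensatedExp [IsFiniteMeasure μ] (hB : 0 < B)
    (hX : ∀ i, 1 ≤ i → StronglyMeasurable[ℱ i] (X i))
    (hXB : ∀ i, 1 ≤ i → ∀ᵐ ω ∂μ, X i ω ∈ Set.Icc 0 B) (n : ℕ) :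
    Integrable (compensatedExp μ ℱ X B n) μ := by
  have hbounds : ∀ᵐ ω ∂μ, ∀ i ∈ Icc 1 n,
      X i ω ∈ Set.Icc 0 B ∧ μ[X i | ℱ (i - 1)] ω ∈ Set.Icc 0 B := by
    refine (Filter.eventually_all_finset _).2 fun i hi ↦ ?_
    have hi1 := (mem_Icc.1 hi).1
    have hX_int := integrable_of_ae_mem_Icc
      ((hX i hi1).mono (ℱ.le i)).aestronglyMeasurable (hXB i hi1)
    exact (hXB i hi1).and (condExp_ae_mem_Icc (ℱ.le _) hX_int (hXB i hi1))
  refine integrable_of_ae_mem_Icc (a := 0) (b := Real.exp (n / 2))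
    ((stronglyAdapted_compensatedExp hX n).mono (ℱ.le n)).aestronglyMeasurable ?_
  filter_upwards [hbounds] with ω hω
  exact ⟨(compensatedExp_pos n ω).le, compensatedExp_le_exp hB (fun i hi ↦ (hω i hi).1.1)
    fun i hi ↦ (hω i hi).2.2⟩

theorem supermartingale_compensatedExp [IsFiniteMeasure μ] (hB : 0 < B)
    (hX : ∀ i, 1 ≤ i → StronglyMeasurable[ℱ i] (X i))
    (hXB : ∀ i, 1 ≤ i → ∀ᵐ ω ∂μ, X i ω ∈ Set.Icc 0 B) :
    Supermartingale (compensatedExp μ ℱ X B) ℱ μ := by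
  set W := compensatedExp μ ℱ X B
  refine supermartingale_nat (stronglyAdapted_compensatedExp hX)
    (integrable_compensatedExp hB hX hXB) fun n ↦ ?_
  set F : Ω → ℝ := fun ω ↦ W n ω * Real.exp ((2 * B)⁻¹ * μ[X (n + 1) | ℱ n] ω)
  set h : Ω → ℝ := fun ω ↦ Real.exp (-(Real.log 2 / B * X (n + 1) ω))
  have hW_succ : W (n + 1) = F * h := funext (compensatedExp_succ n)
  have hF : StronglyMeasurable[ℱ n] F := (stronglyAdapted_compensatedExp hX n).mul
    (stronglyMeasurable_condExp.measurable.const_mul _).exp.stronglyMeasurable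
  have hX_meas : AEStronglyMeasurable (X (n + 1)) μ :=
    ((hX _ n.succ_pos).mono (ℱ.le _)).aestronglyMeasurable
  have hh_int : Integrable h μ :=
    integrable_exp_neg_mul (div_nonneg (Real.log_nonneg one_le_two) hB.le) hX_meas
      (by filter_upwards [hXB _ n.succ_pos] with ω hω using hω.1)
  filter_upwards [condExp_mul_of_stronglyMeasurable_left hF
      (hW_succ ▸ integrable_compensatedExp hB hX hXB (n + 1)) hh_int,
    condExp_exp_neg_log_two_div_mul_le (ℱ.le n) hB hX_meas (hXB _ n.succ_pos)] with ω hpull hmgf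
  rw [hW_succ, hpull, Pi.mul_apply]
  calc F ω * μ[h | ℱ n] ω
      ≤ F ω * Real.exp (-((2 * B)⁻¹ * μ[X (n + 1) | ℱ n] ω)) :=
        mul_le_mul_of_nonneg_left hmgf (mul_pos (compensatedExp_pos n ω) (Real.exp_pos _)).le
    _ = W n ω := by rw [mul_assoc, ← Real.exp_add, add_neg_cancel, Real.exp_zero, mul_one]

theorem integral_compensatedExp_le_one [IsProbabilityMeasure μ] (hB : 0 < B)
    (hX : ∀ i, 1 ≤ i → StronglyMeasurable[ℱ i] (X i))
    (hXB : ∀ i, 1 ≤ i → ∀ᵐ ω ∂μ, X i ω ∈ Set.Icc 0 B) (n : ℕ) :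
    ∫ ω, compensatedExp μ ℱ X B n ω ∂μ ≤ 1 := by
  simpa [compensatedExp_zero] using
    (supermartingale_compensatedExp hB hX hXB).setIntegral_le n.zero_le MeasurableSet.univ

end

/-- Lemma B.5: for an adapted sequence `(X_i)` with `0 ≤ X_i ≤ B` a.s., with probability at
least `1 - δ`, simultaneously for all `n ≥ 1`,
`∑_{i=1}^n E[X_i | 𝓕_{i-1}] ≤ 2 ∑_{i=1}^n X_i + 4 B ln(2n/δ)`. -/
theorem e2r_inequality
    {Ω : Type*} {m0 : MeasurableSpace Ω} {μ : Measure Ω} [IsProbabilityMeasure μ]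
    (ℱ : Filtration ℕ m0) (X : ℕ → Ω → ℝ) (B : ℝ) (hB : 0 < B)
    (hadapted : ∀ i, 1 ≤ i → StronglyMeasurable[ℱ i] (X i))
    (hbound : ∀ i, 1 ≤ i → ∀ᵐ ω ∂μ, X i ω ∈ Set.Icc (0 : ℝ) B)
    (δ : ℝ) (hδ0 : 0 < δ) (hδ1 : δ < 1) :
    ENNReal.ofReal (1 - δ) ≤
      μ {ω | ∀ n : ℕ, 1 ≤ n →
        ∑ i ∈ Finset.Icc 1 n, (μ[X i | ℱ (i - 1)]) ω ≤
          2 * ∑ i ∈ Finset.Icc 1 n, X i ω + 4 * B * Real.log (2 * n / δ)} := by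
  set W := compensatedExp μ ℱ X B
  have hmarkov n : μ {ω | 1 ≤ n ∧ (2 * n / δ) ^ 2 ≤ W n ω}
      ≤ ENNReal.ofReal (1 / (2 * n / δ) ^ 2) := by
    rcases Nat.eq_zero_or_pos n with rfl | hn
    · simp
    exact (measure_mono fun ω hω ↦ hω.2).trans <| measure_ge_le_ofReal_div_of_integral_le
      (.of_forall fun ω ↦ (compensatedExp_pos n ω).le)
      (integrable_compensatedExp hB hadapted hbound n)
      (integral_compensatedExp_le_one hB hadapted hbound n) (by positivity)
  have hnonneg : ∀ᵐ ω ∂μ, ∀ i, 1 ≤ i → 0 ≤ X i ω :=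
    ae_all_iff.2 fun i ↦ Filter.eventually_imp_distrib_left.2 fun hi ↦
      (hbound i hi).mono fun _ hω ↦ hω.1
  refine ofReal_one_sub_le_of_measure_compl_le hδ0.le <|
    (measure_mono_ae ?_).trans (measure_iUnion_le_of_le_inv_sq hδ0.le hδ1.le hmarkov)
  filter_upwards [hnonneg] with ω hω (hfail : ω ∉ {ω | _})
  simp only [Set.mem_ofPred_eq, not_forall, not_le] at hfail
  obtain ⟨n, hn, hlt⟩ := hfail
  exact Set.mem_iUnion.2 ⟨n, hn, sq_le_compensatedExp_of_lt hB (by positivity)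
    (fun i hi ↦ hω i (mem_Icc.1 hi).1) hlt⟩
end

section
/- Visit-ratio counting bound (proved inside Lemma: transition-sum of the paper): Let H and K be positive integers and let n_1, …, n_K be natural numbers with n_k ≤ H for every k. Set N_k = Σ_{j=1}^{k−1} n_j (so N_1 = 0 and N_{K+1} = Σ_{k=1}^K n_k). Then Σ_{k=1}^K n_k / max(1, N_k) ≤ H + 1 + ln(max(1, N_{K+1})). -/
open Finset

lemma harmonic_aux (M : ℕ) : ∑ i ∈ Finset.range M, (1:ℝ)/(i+2) ≤ Real.log (M+1) := by
  induction M with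
  | zero => simp
  | succ M ih =>
    rw [Finset.sum_range_succ]
    have h1 : Real.log (((M:ℝ)+1)/((M:ℝ)+2)) ≤ ((M:ℝ)+1)/((M:ℝ)+2) - 1 :=
      Real.log_le_sub_one_of_pos (by positivity)
    have h2 : Real.log (((M:ℝ)+1)/((M:ℝ)+2)) = Real.log ((M:ℝ)+1) - Real.log ((M:ℝ)+2) := by
      rw [Real.log_div (by positivity) (by positivity)]
    have h3 : ((M:ℝ)+1)/((M:ℝ)+2) - 1 = -(1/((M:ℝ)+2)) := by
      field_simp
      norm_num
    push_cast
    have : (1:ℝ)/((M:ℝ)+2) ≤ Real.log ((M:ℝ)+2) - Real.log ((M:ℝ)+1) := by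
      rw [h2, h3] at h1; linarith
    have hgoal : Real.log ((M:ℝ)+1+1) = Real.log ((M:ℝ)+2) := by ring_nf
    rw [hgoal]
    linarith

/-- Visit-ratio counting bound: with `n_k ≤ H` and `N_k = ∑_{j=1}^{k-1} n_j`,
`∑_{k=1}^K n_k / max(1, N_k) ≤ H + 1 + ln(max(1, N_{K+1}))`. -/
theorem visit_ratio_bound (H K : ℕ) (hH : 0 < H) (hK : 0 < K)
    (n : ℕ → ℕ) (hn : ∀ k ∈ Finset.Icc 1 K, n k ≤ H)
    (N : ℕ → ℕ) (hN : ∀ k, N k = ∑ j ∈ Finset.Ico 1 k, n j) :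
    ∑ k ∈ Finset.Icc 1 K, (n k : ℝ) / max 1 (N k : ℝ) ≤
      (H : ℝ) + 1 + Real.log (max 1 (N (K + 1) : ℝ)) := by
  set f : ℕ → ℝ := fun i => 1 / max 1 ((i:ℝ) - H + 1) with hf
  have hfpos : ∀ i, 0 < max 1 ((i:ℝ) - H + 1) := fun i => lt_of_lt_of_le one_pos (le_max_left _ _)
  have hf01 : ∀ i, 0 ≤ f i ∧ f i ≤ 1 := by
    intro i
    constructor
    · exact div_nonneg one_pos.le (hfpos i).le
    · rw [hf]; simp only
      rw [div_le_one (hfpos i)]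
      exact le_max_left _ _
  have hNle : ∀ a b : ℕ, a ≤ b → N a ≤ N b := by
    intro a b hab
    rw [hN, hN]
    exact Finset.sum_le_sum_of_subset (Finset.Ico_subset_Ico le_rfl hab)
  have hNstep : ∀ k, 1 ≤ k → N (k+1) = N k + n k := by
    intro k hk
    rw [hN, hN, Finset.sum_Ico_succ_top hk]
  -- step 1: per-episode bound
  have step1 : ∀ k ∈ Finset.Icc 1 K,
      (n k : ℝ) / max 1 (N k : ℝ) ≤ ∑ i ∈ Finset.Ico (N k) (N (k+1)), f i := by
    intro k hk
    rw [Finset.mem_Icc] at hk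
    have hnk := hn k (Finset.mem_Icc.mpr hk)
    rw [hNstep k hk.1]
    have hcard : (Finset.Ico (N k) (N k + n k)).card = n k := by
      rw [Nat.card_Ico]; omega
    have hbound : ∀ i ∈ Finset.Ico (N k) (N k + n k),
        1 / max 1 ((N k : ℝ)) ≤ f i := by
      intro i hi
      rw [Finset.mem_Ico] at hi
      apply one_div_le_one_div_of_le (hfpos i)
      apply max_le (le_max_left _ _)
      have : (i:ℝ) - H + 1 ≤ (N k : ℝ) := by
        have : i + 1 ≤ N k + H := by omega
        have := (Nat.cast_le (α := ℝ)).mpr this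
        push_cast at this ⊢
        linarith
      exact le_trans this (le_max_right _ _)
    calc (n k : ℝ) / max 1 (N k : ℝ)
        = (Finset.Ico (N k) (N k + n k)).card • (1 / max 1 (N k : ℝ)) := by
          rw [hcard]; rw [nsmul_eq_mul]; ring
      _ ≤ ∑ i ∈ Finset.Ico (N k) (N k + n k), f i :=
          Finset.card_nsmul_le_sum _ _ _ hbound
  -- step 2: telescoping the blocks
  have step2 : ∀ J : ℕ, ∑ k ∈ Finset.Icc 1 J, (∑ i ∈ Finset.Ico (N k) (N (k+1)), f i)
      = ∑ i ∈ Finset.Ico (N 1) (N (J+1)), f i := by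
    intro J
    induction J with
    | zero => simp
    | succ J ih =>
      rw [Finset.sum_Icc_succ_top (by omega : 1 ≤ J+1), ih]
      exact Finset.sum_Ico_consecutive f (hNle 1 (J+1) (by omega)) (hNle (J+1) (J+2) (by omega))
  have hN1 : N 1 = 0 := by rw [hN]; simp
  -- combine
  have main : ∑ k ∈ Finset.Icc 1 K, (n k : ℝ) / max 1 (N k : ℝ)
      ≤ ∑ i ∈ Finset.range (N (K+1)), f i := by
    calc ∑ k ∈ Finset.Icc 1 K, (n k : ℝ) / max 1 (N k : ℝ)
        ≤ ∑ k ∈ Finset.Icc 1 K, (∑ i ∈ Finset.Ico (N k) (N (k+1)), f i) :=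
          Finset.sum_le_sum step1
      _ = ∑ i ∈ Finset.Ico (N 1) (N (K+1)), f i := step2 K
      _ = ∑ i ∈ Finset.range (N (K+1)), f i := by rw [hN1, Finset.range_eq_Ico]
  refine le_trans main ?_
  -- step 3: bound the harmonic-type sum
  set M := N (K+1) with hM
  have hlogmax : 0 ≤ Real.log (max 1 (M:ℝ)) :=
    Real.log_nonneg (le_max_left _ _)
  by_cases hMH : M ≤ H + 1
  · -- small case: every term ≤ 1
    have : ∑ i ∈ Finset.range M, f i ≤ (M : ℝ) := by
      calc ∑ i ∈ Finset.range M, f i ≤ ∑ i ∈ Finset.range M, (1:ℝ) :=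
            Finset.sum_le_sum (fun i _ => (hf01 i).2)
        _ = (M : ℝ) := by simp
    have hMR : (M : ℝ) ≤ (H : ℝ) + 1 := by exact_mod_cast hMH
    linarith
  · push_neg at hMH
    have hsplit : ∑ i ∈ Finset.range M, f i
        = ∑ i ∈ Finset.range (H+1), f i + ∑ i ∈ Finset.Ico (H+1) M, f i := by
      simp only [Finset.range_eq_Ico]
      exact (Finset.sum_Ico_consecutive f (Nat.zero_le _) (le_of_lt hMH)).symm
    have hfirst : ∑ i ∈ Finset.range (H+1), f i ≤ (H:ℝ) + 1 := by
      calc ∑ i ∈ Finset.range (H+1), f i ≤ ∑ i ∈ Finset.range (H+1), (1:ℝ) :=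
            Finset.sum_le_sum (fun i _ => (hf01 i).2)
        _ = (H:ℝ) + 1 := by simp
    have hsecond : ∑ i ∈ Finset.Ico (H+1) M, f i ≤ Real.log (max 1 (M:ℝ)) := by
      rw [Finset.sum_Ico_eq_sum_range]
      have heq : ∀ i ∈ Finset.range (M - (H+1)), f (H + 1 + i) = (1:ℝ)/(i+2) := by
        intro i _
        rw [hf]; simp only
        congr 1
        rw [max_eq_right]
        · push_cast; ring
        · push_cast; linarith [Nat.cast_nonneg (α := ℝ) i]
      rw [Finset.sum_congr rfl heq]
      calc ∑ i ∈ Finset.range (M - (H+1)), (1:ℝ)/(i+2)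
          ≤ Real.log ((M - (H+1) : ℕ) + 1) := harmonic_aux _
        _ ≤ Real.log (max 1 (M:ℝ)) := by
            apply Real.log_le_log (by positivity)
            have h1 : ((M - (H+1) : ℕ) : ℝ) = (M:ℝ) - (H+1) := by
              push_cast [Nat.cast_sub (le_of_lt hMH)]; ring
            rw [h1]
            have : (M:ℝ) - (H+1) + 1 ≤ (M:ℝ) := by
              have : (0:ℝ) ≤ H := Nat.cast_nonneg H
              linarith
            exact le_trans this (le_max_right _ _)
    rw [hsplit]
    linarith
end

section
/- Deterministic core of Lemma: cost-bound of the paper: Let x, c, A be nonnegative reals satisfying |x − c| ≤ 2√(A·x) + 7A, and define ĉ = max(0, x − 2√(A·x) − 7A). Then: (i) ĉ ≤ c; (ii) x ≤ c + 4√(A·c) + 23A; (iii) x ≤ 3c + 25A; (iv) c − ĉ ≤ 8√(A·c) + 34A. -/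
/-- Deterministic core of the cost-bound lemma: if `|x - c| ≤ 2√(A x) + 7A` and
`ĉ = max(0, x - 2√(A x) - 7A)`, then `ĉ ≤ c`, `x ≤ c + 4√(A c) + 23 A`,
`x ≤ 3 c + 25 A`, and `c - ĉ ≤ 8√(A c) + 34 A`. -/
theorem cost_bound_core (x c A : ℝ) (hx : 0 ≤ x) (hc : 0 ≤ c) (hA : 0 ≤ A)
    (h : |x - c| ≤ 2 * Real.sqrt (A * x) + 7 * A)
    (chat : ℝ) (hchat : chat = max 0 (x - 2 * Real.sqrt (A * x) - 7 * A)) :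
    chat ≤ c ∧
      x ≤ c + 4 * Real.sqrt (A * c) + 23 * A ∧
      x ≤ 3 * c + 25 * A ∧
      c - chat ≤ 8 * Real.sqrt (A * c) + 34 * A := by
  set s := Real.sqrt (A * x) with hs
  set t := Real.sqrt (A * c) with ht
  have hs0 : 0 ≤ s := Real.sqrt_nonneg _
  have ht0 : 0 ≤ t := Real.sqrt_nonneg _
  have hs2 : s ^ 2 = A * x := Real.sq_sqrt (mul_nonneg hA hx)
  have ht2 : t ^ 2 = A * c := Real.sq_sqrt (mul_nonneg hA hc)
  have habs := abs_le.mp h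
  have hxc : x ≤ c + 2 * s + 7 * A := by linarith [habs.2]
  have hst : s ≤ t + 4 * A := by
    nlinarith [sq_nonneg (s - t - 4 * A), sq_nonneg (s + t), mul_le_mul_of_nonneg_left hxc hA]
  have hchatle : chat ≤ c := by
    rw [hchat]; exact max_le hc (by linarith [habs.2])
  have h2 : x ≤ c + 4 * t + 23 * A := by nlinarith
  have h3 : x ≤ 3 * c + 25 * A := by nlinarith [sq_nonneg (Real.sqrt A - Real.sqrt c), sq_nonneg (t - (A + c)/2)]
  have h4 : c - chat ≤ 8 * t + 34 * A := by
    have : x - 2 * s - 7 * A ≤ chat := hchat ▸ le_max_right _ _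
    nlinarith [habs.1]
  exact ⟨hchatle, h2, h3, h4⟩
end

section
/- Occupancy-measure difference value form (second statement of Lemma: om-diff of the paper): Let π be a policy and let P and P̂ be two transition functions; write q = q_{P,π} and q̂ = q_{P̂,π}. Then for every cost function c : S × A × {1,…,H} → ℝ: ⟨q̂ − q, c⟩ = Σ_{h=1}^{H−1} Σ_{s∈S} Σ_{a∈A} Σ_{s'∈S} q(s,a,h) · (P̂(s,a,h)(s') − P(s,a,h)(s')) · J^{P̂,π,c}(s', h+1). -/
open Finset

/-- Finite-horizon occupancy measure `q_{P,π,(s̄,h̄)}`, defined recursively over layers. -/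
noncomputable def occ {S A : Type*} [Fintype S] [Fintype A] [DecidableEq S]
    (π : S → ℕ → A → ℝ) (P : S → A → ℕ → S → ℝ) (sb : S) (hb : ℕ) :
    ℕ → S → A → ℝ
  | 0 => fun s a => if hb = 0 then (if s = sb then π s 0 a else 0) else 0
  | (h + 1) => fun s a =>
      if h + 1 < hb then 0
      else if h + 1 = hb then (if s = sb then π s (h + 1) a else 0)
      else π s (h + 1) a * ∑ s' : S, ∑ a' : A, P s' a' h s * occ π P sb hb h s' a'

section aux
variable {S A : Type*} [Fintype S] [Fintype A] [DecidableEq S]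

lemma sum3 {M : Type*} [AddCommMonoid M] {α β γ : Type*}
    (s : Finset α) (t : Finset β) (u : Finset γ) (f : α → β → γ → M) :
    ∑ x ∈ s, ∑ y ∈ t, ∑ z ∈ u, f x y z = ∑ z ∈ u, ∑ x ∈ s, ∑ y ∈ t, f x y z := by
  calc ∑ x ∈ s, ∑ y ∈ t, ∑ z ∈ u, f x y z
      = ∑ x ∈ s, ∑ z ∈ u, ∑ y ∈ t, f x y z :=
        Finset.sum_congr rfl fun x _ => Finset.sum_comm
    _ = ∑ z ∈ u, ∑ x ∈ s, ∑ y ∈ t, f x y z := Finset.sum_comm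

variable (π : S → ℕ → A → ℝ) (P : S → A → ℕ → S → ℝ)

lemma occ_of_lt (sb : S) (hb h : ℕ) (hlt : h < hb) (s : S) (a : A) :
    occ π P sb hb h s a = 0 := by
  cases h with
  | zero => simp only [occ]; rw [if_neg (by omega)]
  | succ k => simp only [occ]; rw [if_pos hlt]

lemma occ_self (sb : S) (hb : ℕ) (s : S) (a : A) :
    occ π P sb hb hb s a = if s = sb then π s hb a else 0 := by
  cases hb with
  | zero => simp [occ]
  | succ k => simp only [occ]; rw [if_neg (by omega)]; simp

lemma occ_succ (sb : S) (hb h : ℕ) (hle : hb ≤ h) (s : S) (a : A) :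
    occ π P sb hb (h+1) s a
      = π s (h+1) a * ∑ s' : S, ∑ a' : A, P s' a' h s * occ π P sb hb h s' a' := by
  simp only [occ]; rw [if_neg (by omega), if_neg (by omega)]

lemma occ_decomp (sb : S) (hb : ℕ) :
    ∀ h, hb < h → ∀ s a,
      occ π P sb hb h s a
        = ∑ s' : S, (∑ a' : A, π sb hb a' * P sb a' hb s') * occ π P s' (hb+1) h s a := by
  intro h
  induction h with
  | zero => omega
  | succ k ih =>
    intro hk s a
    rcases eq_or_lt_of_le (Nat.le_of_lt_succ hk) with hk' | hk'
    · subst hk'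
      rw [occ_succ π P sb hb hb le_rfl]
      simp only [occ_self]
      have L : (∑ s' : S, ∑ a' : A, P s' a' hb s * (if s' = sb then π s' hb a' else 0))
          = ∑ a' : A, P sb a' hb s * π sb hb a' := by
        rw [Finset.sum_eq_single sb]
        · simp
        · intro b _ hb'; simp [hb']
        · simp
      have R : (∑ s' : S, (∑ a' : A, π sb hb a' * P sb a' hb s')
            * (if s = s' then π s (hb+1) a else 0))
          = (∑ a' : A, π sb hb a' * P sb a' hb s) * π s (hb+1) a := by
        rw [Finset.sum_eq_single s]
        · simp
        · intro b _ hb'; simp [Ne.symm hb']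
        · simp
      rw [L, R, Finset.mul_sum, Finset.sum_mul]
      apply Finset.sum_congr rfl; intro a' _; ring
    · rw [occ_succ π P sb hb k (le_of_lt hk')]
      have hL : (∑ s' : S, ∑ a' : A, P s' a' k s * occ π P sb hb k s' a')
          = ∑ s' : S, ∑ a' : A, P s' a' k s *
              ∑ s'' : S, (∑ a'' : A, π sb hb a'' * P sb a'' hb s'') * occ π P s'' (hb+1) k s' a' :=
        Finset.sum_congr rfl fun s' _ => Finset.sum_congr rfl fun a' _ => by rw [ih hk' s' a']
      have hR : (∑ s' : S, (∑ a' : A, π sb hb a' * P sb a' hb s') * occ π P s' (hb+1) (k+1) s a)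
          = ∑ s' : S, (∑ a' : A, π sb hb a' * P sb a' hb s') *
              (π s (k+1) a * ∑ s1 : S, ∑ a1 : A, P s1 a1 k s * occ π P s' (hb+1) k s1 a1) :=
        Finset.sum_congr rfl fun s' _ => by rw [occ_succ π P s' (hb+1) k (by omega)]
      rw [hL, hR]
      simp only [Finset.mul_sum]
      conv_rhs => rw [Finset.sum_comm]
      apply Finset.sum_congr rfl; intro s1 _
      rw [Finset.sum_comm]
      apply Finset.sum_congr rfl; intro s' _
      apply Finset.sum_congr rfl; intro a1 _
      ring
end aux

/-- cost-to-go under `Phat`. -/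
noncomputable def Jf {S A : Type*} [Fintype S] [Fintype A] [DecidableEq S]
    (π : S → ℕ → A → ℝ) (Phat : S → A → ℕ → S → ℝ) (c : S → A → ℕ → ℝ) (H : ℕ)
    (s : S) (h : ℕ) : ℝ :=
  ∑ s'' : S, ∑ a'' : A, ∑ h' ∈ Finset.Icc 1 H, occ π Phat s h h' s'' a'' * c s'' a'' h'

section jlem
variable {S A : Type*} [Fintype S] [Fintype A] [DecidableEq S]
variable (π : S → ℕ → A → ℝ) (Phat : S → A → ℕ → S → ℝ) (c : S → A → ℕ → ℝ) (H : ℕ)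

lemma Jf_last (hH : 1 ≤ H) (s : S) : Jf π Phat c H s H = ∑ a : A, π s H a * c s a H := by
  calc Jf π Phat c H s H
      = ∑ h' ∈ Finset.Icc 1 H, ∑ s'' : S, ∑ a'' : A,
          occ π Phat s H h' s'' a'' * c s'' a'' h' := sum3 _ _ _ _
    _ = ∑ s'' : S, ∑ a'' : A, occ π Phat s H H s'' a'' * c s'' a'' H := by
        apply Finset.sum_eq_single_of_mem H (by rw [Finset.mem_Icc]; omega)
        intro b hb hbH
        apply Finset.sum_eq_zero; intro s'' _
        apply Finset.sum_eq_zero; intro a'' _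
        rw [occ_of_lt π Phat s H b (by rw [Finset.mem_Icc] at hb; omega), zero_mul]
    _ = ∑ a : A, π s H a * c s a H := by
        simp only [occ_self]
        rw [Finset.sum_eq_single s]
        · simp
        · intro b _ hbs
          apply Finset.sum_eq_zero; intro a _; rw [if_neg hbs, zero_mul]
        · simp

lemma Jf_bellman (h : ℕ) (h1 : 1 ≤ h) (h2 : h + 1 ≤ H) (s : S) :
    Jf π Phat c H s h = (∑ a : A, π s h a * c s a h)
      + ∑ s' : S, (∑ a : A, π s h a * Phat s a h s') * Jf π Phat c H s' (h+1) := by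
  have hJo : ∀ s' : S, Jf π Phat c H s' (h+1)
      = ∑ h' ∈ Finset.Ioc h H, ∑ s'' : S, ∑ a'' : A,
          occ π Phat s' (h+1) h' s'' a'' * c s'' a'' h' := by
    intro s'
    calc Jf π Phat c H s' (h+1)
        = ∑ h' ∈ Finset.Icc 1 H, ∑ s'' : S, ∑ a'' : A,
            occ π Phat s' (h+1) h' s'' a'' * c s'' a'' h' := sum3 _ _ _ _
      _ = _ := by
          refine (Finset.sum_subset ?_ ?_).symm
          · intro x hx; rw [Finset.mem_Ioc] at hx; rw [Finset.mem_Icc]; omega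
          · intro x hx hnx
            rw [Finset.mem_Icc] at hx; rw [Finset.mem_Ioc] at hnx
            apply Finset.sum_eq_zero; intro s'' _
            apply Finset.sum_eq_zero; intro a'' _
            rw [occ_of_lt π Phat s' (h+1) x (by omega), zero_mul]
  calc Jf π Phat c H s h
      = ∑ h' ∈ Finset.Icc 1 H, ∑ s'' : S, ∑ a'' : A,
          occ π Phat s h h' s'' a'' * c s'' a'' h' := sum3 _ _ _ _
    _ = ∑ h' ∈ Finset.Icc h H, ∑ s'' : S, ∑ a'' : A,
          occ π Phat s h h' s'' a'' * c s'' a'' h' := by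
        refine (Finset.sum_subset (Finset.Icc_subset_Icc (by omega) le_rfl) ?_).symm
        intro x hx hnx
        rw [Finset.mem_Icc] at hx; rw [Finset.mem_Icc] at hnx
        apply Finset.sum_eq_zero; intro s'' _
        apply Finset.sum_eq_zero; intro a'' _
        rw [occ_of_lt π Phat s h x (by omega), zero_mul]
    _ = (∑ s'' : S, ∑ a'' : A, occ π Phat s h h s'' a'' * c s'' a'' h)
        + ∑ h' ∈ Finset.Ioc h H, ∑ s'' : S, ∑ a'' : A,
            occ π Phat s h h' s'' a'' * c s'' a'' h' := by
        rw [Finset.Icc_eq_cons_Ioc (by omega : h ≤ H), Finset.sum_cons]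
    _ = (∑ a : A, π s h a * c s a h)
        + ∑ s' : S, (∑ a : A, π s h a * Phat s a h s') * Jf π Phat c H s' (h+1) := by
        congr 1
        · simp only [occ_self]
          rw [Finset.sum_eq_single s]
          · simp
          · intro b _ hbs
            apply Finset.sum_eq_zero; intro a _; rw [if_neg hbs, zero_mul]
          · simp
        · have hd : ∀ h' ∈ Finset.Ioc h H,
              (∑ s'' : S, ∑ a'' : A, occ π Phat s h h' s'' a'' * c s'' a'' h')
              = ∑ s' : S, (∑ a : A, π s h a * Phat s a h s') *
                  (∑ s'' : S, ∑ a'' : A, occ π Phat s' (h+1) h' s'' a'' * c s'' a'' h') := by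
            intro h' hh'
            have hlt : h < h' := (Finset.mem_Ioc.1 hh').1
            calc (∑ s'' : S, ∑ a'' : A, occ π Phat s h h' s'' a'' * c s'' a'' h')
                = ∑ s'' : S, ∑ a'' : A,
                    (∑ s' : S, (∑ a : A, π s h a * Phat s a h s') *
                      occ π Phat s' (h+1) h' s'' a'') * c s'' a'' h' :=
                  Finset.sum_congr rfl fun s'' _ => Finset.sum_congr rfl fun a'' _ => by
                    rw [occ_decomp π Phat s h h' hlt s'' a'']
              _ = _ := by
                  simp only [Finset.sum_mul, Finset.mul_sum]
                  rw [sum3]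
                  exact Finset.sum_congr rfl fun s' _ => Finset.sum_congr rfl fun s'' _ =>
                    Finset.sum_congr rfl fun a'' _ =>
                      Finset.sum_congr rfl fun x _ => by ring
          rw [Finset.sum_congr rfl hd, Finset.sum_comm]
          refine Finset.sum_congr rfl fun s' _ => ?_
          rw [hJo s', Finset.mul_sum]
end jlem

/-- Occupancy-measure difference, value form (second statement of Lemma om-diff):
`⟨q̂ − q, c⟩ = ∑_{h=1}^{H−1} ∑_{s,a,s'} q(s,a,h) (P̂(s'|s,a,h) − P(s'|s,a,h)) J^{P̂,π,c}(s',h+1)`. -/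
theorem om_diff_value_form
    {S A : Type*} [Fintype S] [Fintype A] [DecidableEq S] [Nonempty S] [Nonempty A]
    (H : ℕ) (hH : 2 ≤ H) (s0 : S)
    (π : S → ℕ → A → ℝ)
    (hπ0 : ∀ s, ∀ h ∈ Finset.Icc 1 H, ∀ a, 0 ≤ π s h a)
    (hπ1 : ∀ s, ∀ h ∈ Finset.Icc 1 H, ∑ a : A, π s h a = 1)
    (P Phat : S → A → ℕ → S → ℝ)
    (hP0 : ∀ s a, ∀ h ∈ Finset.Icc 1 (H - 1), ∀ s', 0 ≤ P s a h s')
    (hP1 : ∀ s a, ∀ h ∈ Finset.Icc 1 (H - 1), ∑ s' : S, P s a h s' = 1)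
    (hPhat0 : ∀ s a, ∀ h ∈ Finset.Icc 1 (H - 1), ∀ s', 0 ≤ Phat s a h s')
    (hPhat1 : ∀ s a, ∀ h ∈ Finset.Icc 1 (H - 1), ∑ s' : S, Phat s a h s' = 1)
    (c : S → A → ℕ → ℝ) :
    (∑ s : S, ∑ a : A, ∑ h ∈ Finset.Icc 1 H,
        (occ π Phat s0 1 h s a - occ π P s0 1 h s a) * c s a h) =
      ∑ h ∈ Finset.Icc 1 (H - 1), ∑ s : S, ∑ a : A, ∑ s' : S,
        occ π P s0 1 h s a * (Phat s a h s' - P s a h s') *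
          (∑ s'' : S, ∑ a'' : A, ∑ h' ∈ Finset.Icc 1 H,
            occ π Phat s' (h + 1) h' s'' a'' * c s'' a'' h') := by
  classical
  obtain ⟨m, rfl⟩ : ∃ m, H = m + 2 := ⟨H - 2, by omega⟩
  rw [show m + 2 - 1 = m + 1 from by omega]
  show (∑ s : S, ∑ a : A, ∑ h ∈ Finset.Icc 1 (m+2),
        (occ π Phat s0 1 h s a - occ π P s0 1 h s a) * c s a h)
      = ∑ h ∈ Finset.Icc 1 (m+1), ∑ s : S, ∑ a : A, ∑ s' : S,
          occ π P s0 1 h s a * (Phat s a h s' - P s a h s') * Jf π Phat c (m+2) s' (h+1)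
  have hmem : ∀ h : ℕ, 1 ≤ h → h ≤ m + 2 → h ∈ Finset.Icc 1 (m+2) := by
    intro h a b; rw [Finset.mem_Icc]; omega
  have qprod : ∀ h, 1 ≤ h → h ≤ m + 2 → ∀ (s : S) (a : A),
      occ π P s0 1 h s a = π s h a * ∑ a' : A, occ π P s0 1 h s a' := by
    intro h h1 h2 s a
    obtain ⟨k, rfl⟩ : ∃ k, h = k + 1 := ⟨h - 1, by omega⟩
    cases k with
    | zero =>
      simp only [Nat.zero_add]
      simp only [occ_self]
      by_cases hs : s = s0
      · subst hs; simp [hπ1 s 1 (hmem 1 le_rfl (by omega))]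
      · simp [hs]
    | succ n =>
      rw [occ_succ π P s0 1 (n+1) (by omega) s a]
      have e : (∑ a' : A, occ π P s0 1 (n+1+1) s a')
          = ∑ s' : S, ∑ a1 : A, P s' a1 (n+1) s * occ π P s0 1 (n+1) s' a1 := by
        calc (∑ a' : A, occ π P s0 1 (n+1+1) s a')
            = ∑ a' : A, π s (n+1+1) a' *
                ∑ s' : S, ∑ a1 : A, P s' a1 (n+1) s * occ π P s0 1 (n+1) s' a1 :=
              Finset.sum_congr rfl fun a' _ => occ_succ π P s0 1 (n+1) (by omega) s a'
          _ = (∑ a' : A, π s (n+1+1) a') *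
                ∑ s' : S, ∑ a1 : A, P s' a1 (n+1) s * occ π P s0 1 (n+1) s' a1 := by
              rw [Finset.sum_mul]
          _ = _ := by rw [hπ1 s (n+1+1) (hmem _ (by omega) (by omega)), one_mul]
      rw [e]
  have qmul : ∀ h, 1 ≤ h → h ≤ m + 2 → ∀ (s : S) (X : A → ℝ),
      (∑ a' : A, occ π P s0 1 h s a') * (∑ a : A, π s h a * X a)
        = ∑ a : A, occ π P s0 1 h s a * X a := by
    intro h h1 h2 s X
    rw [Finset.mul_sum]
    exact Finset.sum_congr rfl fun a _ => by rw [qprod h h1 h2 s a]; ring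
  have qb_succ : ∀ h, 1 ≤ h → h + 1 ≤ m + 2 → ∀ s' : S,
      (∑ a'' : A, occ π P s0 1 (h+1) s' a'')
        = ∑ s : S, ∑ a : A, occ π P s0 1 h s a * P s a h s' := by
    intro h h1 h2 s'
    calc (∑ a'' : A, occ π P s0 1 (h+1) s' a'')
        = ∑ a'' : A, π s' (h+1) a'' *
            ∑ s : S, ∑ a : A, P s a h s' * occ π P s0 1 h s a :=
          Finset.sum_congr rfl fun a'' _ => occ_succ π P s0 1 h (by omega) s' a''
      _ = (∑ a'' : A, π s' (h+1) a'') *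
            ∑ s : S, ∑ a : A, P s a h s' * occ π P s0 1 h s a := by rw [Finset.sum_mul]
      _ = ∑ s : S, ∑ a : A, P s a h s' * occ π P s0 1 h s a := by
          rw [hπ1 s' (h+1) (hmem _ (by omega) (by omega)), one_mul]
      _ = _ := Finset.sum_congr rfl fun s _ => Finset.sum_congr rfl fun a _ => by ring
  set F : ℕ → ℝ := fun h => ∑ s : S, (∑ a : A, occ π P s0 1 h s a) * Jf π Phat c (m+2) s h
    with hF
  have key : ∀ h, 1 ≤ h → h ≤ m + 1 →
      F h - F (h+1) = (∑ s : S, ∑ a : A, occ π P s0 1 h s a * c s a h)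
        + ∑ s : S, ∑ a : A, ∑ s' : S,
            occ π P s0 1 h s a * (Phat s a h s' - P s a h s') * Jf π Phat c (m+2) s' (h+1) := by
    intro h h1 h2
    have step : F h = (∑ s : S, ∑ a : A, occ π P s0 1 h s a * c s a h)
        + ∑ s : S, ∑ a : A, ∑ s' : S,
            occ π P s0 1 h s a * Phat s a h s' * Jf π Phat c (m+2) s' (h+1) := by
      simp only [hF]
      calc ∑ s : S, (∑ a : A, occ π P s0 1 h s a) * Jf π Phat c (m+2) s h
          = ∑ s : S, ((∑ a : A, occ π P s0 1 h s a) * (∑ a : A, π s h a * c s a h)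
            + ∑ s' : S, (∑ a : A, occ π P s0 1 h s a) *
                ((∑ a : A, π s h a * Phat s a h s') * Jf π Phat c (m+2) s' (h+1))) :=
            Finset.sum_congr rfl fun s _ => by
              rw [Jf_bellman π Phat c (m+2) h h1 (by omega) s, mul_add]
              congr 1
              rw [Finset.mul_sum]
        _ = ∑ s : S, ((∑ a : A, occ π P s0 1 h s a * c s a h)
            + ∑ s' : S, ∑ a : A, occ π P s0 1 h s a *
                (Phat s a h s' * Jf π Phat c (m+2) s' (h+1))) := by
            refine Finset.sum_congr rfl fun s _ => ?_
            congr 1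
            · exact qmul h h1 (by omega) s _
            · refine Finset.sum_congr rfl fun s' _ => ?_
              rw [show (∑ a : A, π s h a * Phat s a h s') * Jf π Phat c (m+2) s' (h+1)
                  = ∑ a : A, π s h a * (Phat s a h s' * Jf π Phat c (m+2) s' (h+1)) from by
                rw [Finset.sum_mul]; exact Finset.sum_congr rfl fun a _ => by ring]
              exact qmul h h1 (by omega) s _
        _ = _ := by
            rw [Finset.sum_add_distrib]
            congr 1
            refine Finset.sum_congr rfl fun s _ => ?_
            rw [Finset.sum_comm]
            exact Finset.sum_congr rfl fun a _ => Finset.sum_congr rfl fun s' _ => by ring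
    have gnext : F (h+1) = ∑ s : S, ∑ a : A, ∑ s' : S,
        occ π P s0 1 h s a * P s a h s' * Jf π Phat c (m+2) s' (h+1) := by
      simp only [hF]
      calc ∑ s' : S, (∑ a : A, occ π P s0 1 (h+1) s' a) * Jf π Phat c (m+2) s' (h+1)
          = ∑ s' : S, (∑ s : S, ∑ a : A, occ π P s0 1 h s a * P s a h s') *
              Jf π Phat c (m+2) s' (h+1) :=
            Finset.sum_congr rfl fun s' _ => by rw [qb_succ h h1 (by omega) s']
        _ = _ := by
            simp only [Finset.sum_mul]
            exact (sum3 Finset.univ Finset.univ Finset.univ fun s a s' =>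
              occ π P s0 1 h s a * P s a h s' * Jf π Phat c (m+2) s' (h+1)).symm
    rw [step, gnext]
    simp only [mul_sub, sub_mul, Finset.sum_sub_distrib]
    ring
  have tele : ∑ h ∈ Finset.Icc 1 (m+1), (F h - F (h+1)) = F 1 - F (m+2) := by
    rw [show Finset.Icc 1 (m+1) = Finset.Ico 1 (m+2) from (Finset.Ico_add_one_right_eq_Icc 1 (m+1)).symm]
    rw [Finset.sum_Ico_eq_sum_range]
    rw [show m + 2 - 1 = m + 1 from by omega]
    calc ∑ i ∈ Finset.range (m+1), (F (1+i) - F (1+i+1))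
        = ∑ i ∈ Finset.range (m+1), (F (i+1) - F (i+1+1)) :=
          Finset.sum_congr rfl fun i _ => by rw [Nat.add_comm 1 i]
      _ = F (0+1) - F (m+1+1) := Finset.sum_range_sub' (fun i => F (i+1)) (m+1)
      _ = F 1 - F (m+2) := by norm_num
  have F1 : F 1 = ∑ s'' : S, ∑ a'' : A, ∑ h' ∈ Finset.Icc 1 (m+2),
      occ π Phat s0 1 h' s'' a'' * c s'' a'' h' := by
    simp only [hF]
    calc ∑ s : S, (∑ a : A, occ π P s0 1 1 s a) * Jf π Phat c (m+2) s 1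
        = ∑ s : S, (if s = s0 then 1 else 0) * Jf π Phat c (m+2) s 1 := by
          refine Finset.sum_congr rfl fun s _ => ?_
          congr 1
          calc (∑ a : A, occ π P s0 1 1 s a)
              = ∑ a : A, (if s = s0 then π s 1 a else 0) :=
              Finset.sum_congr rfl fun a _ => occ_self π P s0 1 s a
            _ = if s = s0 then 1 else 0 := by
              by_cases hs : s = s0
              · simp only [hs, if_true]
                exact hπ1 s0 1 (hmem 1 le_rfl (by omega))
              · simp [hs]
      _ = Jf π Phat c (m+2) s0 1 := by
          rw [Finset.sum_eq_single s0]
          · simp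
          · intro b _ hb; simp [hb]
          · simp
      _ = _ := rfl
  have FH : F (m+2) = ∑ s : S, ∑ a : A, occ π P s0 1 (m+2) s a * c s a (m+2) := by
    simp only [hF]
    refine Finset.sum_congr rfl fun s _ => ?_
    rw [Jf_last π Phat c (m+2) (by omega) s]
    exact qmul (m+2) (by omega) le_rfl s _
  have L : (∑ s : S, ∑ a : A, ∑ h ∈ Finset.Icc 1 (m+2),
        (occ π Phat s0 1 h s a - occ π P s0 1 h s a) * c s a h)
      = (∑ s : S, ∑ a : A, ∑ h ∈ Finset.Icc 1 (m+2), occ π Phat s0 1 h s a * c s a h)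
      - (∑ s : S, ∑ a : A, ∑ h ∈ Finset.Icc 1 (m+2), occ π P s0 1 h s a * c s a h) := by
    simp only [sub_mul, Finset.sum_sub_distrib]
  have split : (∑ s : S, ∑ a : A, ∑ h ∈ Finset.Icc 1 (m+2), occ π P s0 1 h s a * c s a h)
      = (∑ h ∈ Finset.Icc 1 (m+1), ∑ s : S, ∑ a : A, occ π P s0 1 h s a * c s a h)
        + ∑ s : S, ∑ a : A, occ π P s0 1 (m+2) s a * c s a (m+2) := by
    rw [sum3]
    exact Finset.sum_Icc_succ_top (by omega : 1 ≤ m + 1 + 1) _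
  have sumkey : ∑ h ∈ Finset.Icc 1 (m+1), (F h - F (h+1))
      = (∑ h ∈ Finset.Icc 1 (m+1), ∑ s : S, ∑ a : A, occ π P s0 1 h s a * c s a h)
        + ∑ h ∈ Finset.Icc 1 (m+1), ∑ s : S, ∑ a : A, ∑ s' : S,
            occ π P s0 1 h s a * (Phat s a h s' - P s a h s') * Jf π Phat c (m+2) s' (h+1) := by
    rw [← Finset.sum_add_distrib]
    refine Finset.sum_congr rfl fun h hh => ?_
    have hh' := Finset.mem_Icc.1 hh
    exact key h hh'.1 hh'.2
  have main : F 1 - F (m+2)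
      = (∑ h ∈ Finset.Icc 1 (m+1), ∑ s : S, ∑ a : A, occ π P s0 1 h s a * c s a h)
        + ∑ h ∈ Finset.Icc 1 (m+1), ∑ s : S, ∑ a : A, ∑ s' : S,
            occ π P s0 1 h s a * (Phat s a h s' - P s a h s') * Jf π Phat c (m+2) s' (h+1) :=
    tele.symm.trans sumkey
  rw [L, ← F1, split, ← FH]
  linarith [main]
end

section
/- Skewed-occupancy identity (last equality of Lemma: deviation_loop_free of the paper): Let π be a policy, P a transition function, and c : S × A × {1,…,H} → ℝ a cost function. Then Σ_{h=1}^H Σ_{s∈S} q_{P,π}(s,h) · J^{P,π,c}(s,h) = Σ_{s∈S} Σ_{a∈A} Σ_{h=1}^H h · q_{P,π}(s,a,h) · c(s,a,h), where q(s,h) = Σ_a q(s,a,h) and in the right-hand side h is the numerical value of the layer index. -/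
open Finset

lemma occ_before {S A : Type*} [Fintype S] [Fintype A] [DecidableEq S]
    (π : S → ℕ → A → ℝ) (P : S → A → ℕ → S → ℝ) (sb : S) (hb : ℕ)
    {h : ℕ} (hlt : h < hb) (s : S) (a : A) : occ π P sb hb h s a = 0 := by
  cases h with
  | zero => simp only [occ]; rw [if_neg (by omega)]
  | succ k => simp only [occ]; rw [if_pos hlt]

lemma occ_start {S A : Type*} [Fintype S] [Fintype A] [DecidableEq S]
    (π : S → ℕ → A → ℝ) (P : S → A → ℕ → S → ℝ) (sb : S) (h : ℕ) (s : S) (a : A) :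
    occ π P sb (h + 1) (h + 1) s a = if s = sb then π s (h + 1) a else 0 := by
  simp only [occ]
  simp

lemma occ_one {S A : Type*} [Fintype S] [Fintype A] [DecidableEq S]
    (π : S → ℕ → A → ℝ) (P : S → A → ℕ → S → ℝ) (sb : S) (s : S) (a : A) :
    occ π P sb 1 1 s a = if s = sb then π s 1 a else 0 :=
  occ_start π P sb 0 s a

lemma occ_rec {S A : Type*} [Fintype S] [Fintype A] [DecidableEq S]
    (π : S → ℕ → A → ℝ) (P : S → A → ℕ → S → ℝ) (sb : S) {hb h : ℕ}
    (hbn : hb ≤ h) (s : S) (a : A) :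
    occ π P sb hb (h + 1) s a
      = π s (h + 1) a * ∑ s' : S, ∑ a' : A, P s' a' h s * occ π P sb hb h s' a' := by
  simp only [occ]
  rw [if_neg (by omega), if_neg (by omega)]


/-- Skewed-occupancy identity (last equality of Lemma deviation_loop_free):
`∑_{h=1}^H ∑_s q_{P,π}(s,h) J^{P,π,c}(s,h) = ∑_{s,a} ∑_{h=1}^H h · q_{P,π}(s,a,h) c(s,a,h)`. -/
theorem skewed_occupancy_identity
    {S A : Type*} [Fintype S] [Fintype A] [DecidableEq S] [Nonempty S] [Nonempty A]
    (H : ℕ) (hH : 2 ≤ H) (s0 : S)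
    (π : S → ℕ → A → ℝ)
    (hπ0 : ∀ s, ∀ h ∈ Finset.Icc 1 H, ∀ a, 0 ≤ π s h a)
    (hπ1 : ∀ s, ∀ h ∈ Finset.Icc 1 H, ∑ a : A, π s h a = 1)
    (P : S → A → ℕ → S → ℝ)
    (hP0 : ∀ s a, ∀ h ∈ Finset.Icc 1 (H - 1), ∀ s', 0 ≤ P s a h s')
    (hP1 : ∀ s a, ∀ h ∈ Finset.Icc 1 (H - 1), ∑ s' : S, P s a h s' = 1)
    (c : S → A → ℕ → ℝ) :
    ∑ h ∈ Finset.Icc 1 H, ∑ s : S,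
        (∑ a : A, occ π P s0 1 h s a) *
          (∑ s' : S, ∑ a' : A, ∑ h' ∈ Finset.Icc 1 H,
            occ π P s h h' s' a' * c s' a' h') =
      ∑ s : S, ∑ a : A, ∑ h ∈ Finset.Icc 1 H,
        (h : ℝ) * occ π P s0 1 h s a * c s a h := by
  -- factorization of occupancy through the policy
  have hfac : ∀ h, 1 ≤ h → h ≤ H → ∀ s a, occ π P s0 1 h s a
      = π s h a * (∑ b : A, occ π P s0 1 h s b) := by
    intro h h1 hle s a
    obtain ⟨k, rfl⟩ : ∃ k, h = k + 1 := ⟨h - 1, by omega⟩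
    cases k with
    | zero =>
        simp only [Nat.zero_add]
        simp only [occ_one]
        by_cases hs : s = s0
        · subst hs
          simp [hπ1 s 1 (Finset.mem_Icc.mpr ⟨le_rfl, by omega⟩)]
        · simp [hs]
    | succ m =>
        simp only [occ_rec π P s0 (show (1:ℕ) ≤ m + 1 by omega)]
        rw [← Finset.sum_mul,
          hπ1 s (m + 1 + 1) (Finset.mem_Icc.mpr ⟨by omega, hle⟩), one_mul]
  -- chain rule
  have hchain : ∀ h, 1 ≤ h → ∀ h', h ≤ h' → h' ≤ H → ∀ s' a',
      ∑ s : S, (∑ a : A, occ π P s0 1 h s a) * occ π P s h h' s' a'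
        = occ π P s0 1 h' s' a' := by
    intro h h1
    refine Nat.le_induction ?_ ?_
    · intro hle s' a'
      obtain ⟨k, rfl⟩ : ∃ k, h = k + 1 := ⟨h - 1, by omega⟩
      simp only [occ_start]
      rw [Finset.sum_eq_single s']
      · rw [if_pos rfl, hfac (k+1) (by omega) hle s' a']; ring
      · intro b _ hb; rw [if_neg (fun hh => hb hh.symm), mul_zero]
      · intro hb; exact absurd (Finset.mem_univ s') hb
    · intro n hn ih hle s' a'
      have ih' := fun s'' a'' => ih (by omega) s'' a''
      have rhs : occ π P s0 1 (n+1) s' a'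
          = ∑ s'' : S, ∑ a'' : A, π s' (n+1) a' *
              (P s'' a'' n s' * occ π P s0 1 n s'' a'') := by
        rw [occ_rec π P s0 (show (1:ℕ) ≤ n by omega)]
        simp only [Finset.mul_sum]
      calc ∑ s : S, (∑ a : A, occ π P s0 1 h s a) * occ π P s h (n+1) s' a'
          = ∑ s : S, ∑ s'' : S, ∑ a'' : A, π s' (n+1) a' *
              (P s'' a'' n s' *
                ((∑ a : A, occ π P s0 1 h s a) * occ π P s h n s'' a'')) := by
            refine Finset.sum_congr rfl fun s _ => ?_
            rw [occ_rec π P s hn]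
            simp only [Finset.mul_sum]
            exact Finset.sum_congr rfl fun s'' _ =>
              Finset.sum_congr rfl fun a'' _ => by ring
        _ = occ π P s0 1 (n+1) s' a' := by
            rw [rhs, Finset.sum_comm]
            refine Finset.sum_congr rfl fun s'' _ => ?_
            rw [Finset.sum_comm]
            refine Finset.sum_congr rfl fun a'' _ => ?_
            rw [← ih' s'' a'']
            simp only [Finset.mul_sum]
  -- key pointwise identity
  have key : ∀ h ∈ Finset.Icc 1 H, ∀ (s' : S) (a' : A), ∀ h' ∈ Finset.Icc 1 H,
      (∑ s : S, (∑ a : A, occ π P s0 1 h s a) * occ π P s h h' s' a')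
        = if h ≤ h' then occ π P s0 1 h' s' a' else 0 := by
    intro h hh s' a' h' hh'
    simp only [Finset.mem_Icc] at hh hh'
    by_cases hle : h ≤ h'
    · rw [if_pos hle]; exact hchain h hh.1 h' hle hh'.2 s' a'
    · rw [if_neg hle]
      refine Finset.sum_eq_zero fun s _ => ?_
      rw [occ_before π P s h (by omega) s' a', mul_zero]
  -- main computation
  calc ∑ h ∈ Finset.Icc 1 H, ∑ s : S,
        (∑ a : A, occ π P s0 1 h s a) *
          (∑ s' : S, ∑ a' : A, ∑ h' ∈ Finset.Icc 1 H,
            occ π P s h h' s' a' * c s' a' h')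
      = ∑ h ∈ Finset.Icc 1 H, ∑ s' : S, ∑ a' : A, ∑ h' ∈ Finset.Icc 1 H,
          (if h ≤ h' then occ π P s0 1 h' s' a' else 0) * c s' a' h' := by
        refine Finset.sum_congr rfl fun h hh => ?_
        calc ∑ s : S, (∑ a : A, occ π P s0 1 h s a) *
              (∑ s' : S, ∑ a' : A, ∑ h' ∈ Finset.Icc 1 H,
                occ π P s h h' s' a' * c s' a' h')
            = ∑ s' : S, ∑ a' : A, ∑ h' ∈ Finset.Icc 1 H,
                (∑ s : S, (∑ a : A, occ π P s0 1 h s a) * occ π P s h h' s' a')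
                  * c s' a' h' := by
              simp only [Finset.mul_sum]
              rw [Finset.sum_comm]
              refine Finset.sum_congr rfl fun s' _ => ?_
              rw [Finset.sum_comm]
              refine Finset.sum_congr rfl fun a' _ => ?_
              rw [Finset.sum_comm]
              refine Finset.sum_congr rfl fun h' _ => ?_
              rw [Finset.sum_mul]
              exact Finset.sum_congr rfl fun s _ => by ring
          _ = _ := by
              refine Finset.sum_congr rfl fun s' _ => ?_
              refine Finset.sum_congr rfl fun a' _ => ?_
              refine Finset.sum_congr rfl fun h' hh' => ?_
              rw [key h hh s' a' h' hh']
    _ = ∑ s' : S, ∑ a' : A, ∑ h ∈ Finset.Icc 1 H,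
          (h : ℝ) * occ π P s0 1 h s' a' * c s' a' h := by
        rw [Finset.sum_comm]
        refine Finset.sum_congr rfl fun s' _ => ?_
        rw [Finset.sum_comm]
        refine Finset.sum_congr rfl fun a' _ => ?_
        rw [Finset.sum_comm]
        refine Finset.sum_congr rfl fun h' hh' => ?_
        simp only [Finset.mem_Icc] at hh'
        have hite : ∀ h : ℕ,
            (if h ≤ h' then occ π P s0 1 h' s' a' else 0) * c s' a' h'
              = if h ≤ h' then occ π P s0 1 h' s' a' * c s' a' h' else 0 := by
          intro h; split <;> simp
        simp only [hite]
        rw [← Finset.sum_filter]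
        have hfe : (Finset.Icc 1 H).filter (· ≤ h') = Finset.Icc 1 h' := by
          ext x; simp only [Finset.mem_filter, Finset.mem_Icc]; omega
        rw [hfe, Finset.sum_const, Nat.card_Icc]
        simp only [Nat.add_sub_cancel, nsmul_eq_mul]
        ring
end

section
/- Second-moment bound (the inequalities of Lemma: deviation_loop_free of the paper, trajectory form): Let π be a policy, P a transition function, and c : S × A × {1,…,H} → ℝ a cost function with 0 ≤ c(s,a,h) ≤ 1 for all (s,a,h). Then Σ_{τ ∈ (S×A)^H} w(τ) · (Σ_{h=1}^H c(s_h(τ), a_h(τ), h))² ≤ 2 · Σ_{s∈S} Σ_{a∈A} Σ_{h=1}^H h · q(s,a,h) · c(s,a,h), where q(s,a,h) := Σ_{τ ∈ (S×A)^H} w(τ) · 𝟙[s_h(τ) = s and a_h(τ) = a]. -/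
open Finset

/-- State at (1-based) time `h ∈ {1,…,H}` of a trajectory `τ = (s_1,a_1,…,s_H,a_H)`. -/
noncomputable def stt {S A : Type*} [Nonempty S] (H : ℕ) (τ : Fin H → S × A) (h : ℕ) : S :=
  if hlt : h - 1 < H then (τ ⟨h - 1, hlt⟩).1 else Classical.arbitrary S

/-- Action at (1-based) time `h ∈ {1,…,H}` of a trajectory `τ = (s_1,a_1,…,s_H,a_H)`. -/
noncomputable def act {S A : Type*} [Nonempty A] (H : ℕ) (τ : Fin H → S × A) (h : ℕ) : A :=
  if hlt : h - 1 < H then (τ ⟨h - 1, hlt⟩).2 else Classical.arbitrary A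

/-- Weight of a trajectory:
`w(τ) = 𝟙[s_1 = s₀] · ∏_{h=1}^H π(s_h,h)(a_h) · ∏_{h=1}^{H−1} P(s_h,a_h,h)(s_{h+1})`. -/
noncomputable def wt {S A : Type*} [Nonempty S] [Nonempty A] [DecidableEq S]
    (H : ℕ) (s0 : S) (π : S → ℕ → A → ℝ) (P : S → A → ℕ → S → ℝ)
    (τ : Fin H → S × A) : ℝ :=
  (if stt H τ 1 = s0 then 1 else 0) *
    (∏ h ∈ Finset.Icc 1 H, π (stt H τ h) h (act H τ h)) *
    ∏ h ∈ Finset.Icc 1 (H - 1), P (stt H τ h) (act H τ h) h (stt H τ (h + 1))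

lemma sq_sum_le (n : ℕ) (f : ℕ → ℝ) (h0 : ∀ h ∈ Finset.Icc 1 n, 0 ≤ f h)
    (h1 : ∀ h ∈ Finset.Icc 1 n, f h ≤ 1) :
    (∑ h ∈ Finset.Icc 1 n, f h) ^ 2 ≤ ∑ h ∈ Finset.Icc 1 n, 2 * h * f h := by
  induction n with
  | zero => simp
  | succ n ih =>
    have hnot : n + 1 ∉ Finset.Icc 1 n := by simp
    have hsub : ∀ h ∈ Finset.Icc 1 n, h ∈ Finset.Icc 1 (n + 1) := by
      intro h hh; simp only [Finset.mem_Icc] at *; omega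
    have hins : Finset.Icc 1 (n + 1) = insert (n + 1) (Finset.Icc 1 n) := by
      ext x; simp only [Finset.mem_insert, Finset.mem_Icc]; omega
    have ih' := ih (fun h hh => h0 h (hsub h hh)) (fun h hh => h1 h (hsub h hh))
    have hS0 : 0 ≤ ∑ h ∈ Finset.Icc 1 n, f h :=
      Finset.sum_nonneg fun h hh => h0 h (hsub h hh)
    have hSn : ∑ h ∈ Finset.Icc 1 n, f h ≤ n := by
      calc ∑ h ∈ Finset.Icc 1 n, f h ≤ ∑ h ∈ Finset.Icc 1 n, 1 :=
            Finset.sum_le_sum fun h hh => h1 h (hsub h hh)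
        _ = n := by simp
    have hf0 : 0 ≤ f (n + 1) := h0 _ (by simp)
    have hf1 : f (n + 1) ≤ 1 := h1 _ (by simp)
    rw [hins, Finset.sum_insert hnot, Finset.sum_insert hnot]
    push_cast
    nlinarith [sq_nonneg (f (n+1))]

lemma swap4 {α β γ δ : Type*} (sS : Finset α) (sA : Finset β) (sH : Finset γ)
    (sT : Finset δ) (F : α → β → γ → δ → ℝ) :
    ∑ s ∈ sS, ∑ a ∈ sA, ∑ h ∈ sH, ∑ τ ∈ sT, F s a h τ
      = ∑ τ ∈ sT, ∑ h ∈ sH, ∑ s ∈ sS, ∑ a ∈ sA, F s a h τ := by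
  calc ∑ s ∈ sS, ∑ a ∈ sA, ∑ h ∈ sH, ∑ τ ∈ sT, F s a h τ
      = ∑ s ∈ sS, ∑ a ∈ sA, ∑ τ ∈ sT, ∑ h ∈ sH, F s a h τ :=
        Finset.sum_congr rfl fun s _ => Finset.sum_congr rfl fun a _ => Finset.sum_comm
    _ = ∑ s ∈ sS, ∑ τ ∈ sT, ∑ a ∈ sA, ∑ h ∈ sH, F s a h τ :=
        Finset.sum_congr rfl fun s _ => Finset.sum_comm
    _ = ∑ τ ∈ sT, ∑ s ∈ sS, ∑ a ∈ sA, ∑ h ∈ sH, F s a h τ := Finset.sum_comm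
    _ = ∑ τ ∈ sT, ∑ s ∈ sS, ∑ h ∈ sH, ∑ a ∈ sA, F s a h τ :=
        Finset.sum_congr rfl fun τ _ => Finset.sum_congr rfl fun s _ => Finset.sum_comm
    _ = ∑ τ ∈ sT, ∑ h ∈ sH, ∑ s ∈ sS, ∑ a ∈ sA, F s a h τ :=
        Finset.sum_congr rfl fun τ _ => Finset.sum_comm

/-- Second-moment bound (inequalities of Lemma deviation_loop_free, trajectory form):
for `0 ≤ c ≤ 1`,
`∑_τ w(τ) (∑_{h=1}^H c(s_h(τ),a_h(τ),h))² ≤ 2 ∑_{s,a} ∑_{h=1}^H h · q(s,a,h) c(s,a,h)`. -/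
theorem second_moment_bound
    {S A : Type*} [Fintype S] [Fintype A] [DecidableEq S] [DecidableEq A]
    [Nonempty S] [Nonempty A]
    (H : ℕ) (hH : 2 ≤ H) (s0 : S)
    (π : S → ℕ → A → ℝ)
    (hπ0 : ∀ s, ∀ h ∈ Finset.Icc 1 H, ∀ a, 0 ≤ π s h a)
    (hπ1 : ∀ s, ∀ h ∈ Finset.Icc 1 H, ∑ a : A, π s h a = 1)
    (P : S → A → ℕ → S → ℝ)
    (hP0 : ∀ s a, ∀ h ∈ Finset.Icc 1 (H - 1), ∀ s', 0 ≤ P s a h s')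
    (hP1 : ∀ s a, ∀ h ∈ Finset.Icc 1 (H - 1), ∑ s' : S, P s a h s' = 1)
    (c : S → A → ℕ → ℝ)
    (hc0 : ∀ s a, ∀ h ∈ Finset.Icc 1 H, 0 ≤ c s a h)
    (hc1 : ∀ s a, ∀ h ∈ Finset.Icc 1 H, c s a h ≤ 1) :
    ∑ τ : Fin H → S × A, wt H s0 π P τ *
        (∑ h ∈ Finset.Icc 1 H, c (stt H τ h) (act H τ h) h) ^ 2 ≤
      2 * ∑ s : S, ∑ a : A, ∑ h ∈ Finset.Icc 1 H,
        (h : ℝ) *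
          (∑ τ : Fin H → S × A, wt H s0 π P τ *
            (if stt H τ h = s ∧ act H τ h = a then 1 else 0)) *
          c s a h := by
  have hw0 : ∀ τ : Fin H → S × A, 0 ≤ wt H s0 π P τ := by
    intro τ
    unfold wt
    apply mul_nonneg (mul_nonneg (by positivity) _)
    · exact Finset.prod_nonneg fun h hh => hP0 _ _ h hh _
    · exact Finset.prod_nonneg fun h hh => hπ0 _ h hh _
  have step1 : ∑ τ : Fin H → S × A, wt H s0 π P τ *
        (∑ h ∈ Finset.Icc 1 H, c (stt H τ h) (act H τ h) h) ^ 2 ≤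
      ∑ τ : Fin H → S × A, wt H s0 π P τ *
        (∑ h ∈ Finset.Icc 1 H, 2 * h * c (stt H τ h) (act H τ h) h) := by
    apply Finset.sum_le_sum
    intro τ _
    apply mul_le_mul_of_nonneg_left _ (hw0 τ)
    exact sq_sum_le H _ (fun h hh => hc0 _ _ h hh) (fun h hh => hc1 _ _ h hh)
  refine step1.trans (le_of_eq ?_)
  have key : ∀ (τ : Fin H → S × A) (h : ℕ),
      ∑ s : S, ∑ a : A, (h : ℝ) *
        (wt H s0 π P τ * (if stt H τ h = s ∧ act H τ h = a then 1 else 0)) * c s a h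
      = (h : ℝ) * wt H s0 π P τ * c (stt H τ h) (act H τ h) h := by
    intro τ h
    rw [Finset.sum_eq_single (stt H τ h)]
    · rw [Finset.sum_eq_single (act H τ h)]
      · simp [mul_assoc]
      · intro a _ ha; simp [Ne.symm ha]
      · simp
    · intro s _ hs; simp [Ne.symm hs]
    · simp
  have e1 : ∀ (s : S) (a : A) (h : ℕ), (h : ℝ) *
        (∑ τ : Fin H → S × A, wt H s0 π P τ *
          (if stt H τ h = s ∧ act H τ h = a then 1 else 0)) * c s a h
      = ∑ τ : Fin H → S × A, (h : ℝ) *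
          (wt H s0 π P τ * (if stt H τ h = s ∧ act H τ h = a then 1 else 0)) * c s a h := by
    intro s a h
    rw [Finset.mul_sum, Finset.sum_mul]
  calc ∑ τ : Fin H → S × A, wt H s0 π P τ *
        (∑ h ∈ Finset.Icc 1 H, 2 * h * c (stt H τ h) (act H τ h) h)
      = 2 * ∑ τ : Fin H → S × A, ∑ h ∈ Finset.Icc 1 H,
          (h : ℝ) * wt H s0 π P τ * c (stt H τ h) (act H τ h) h := by
        rw [Finset.mul_sum]
        refine Finset.sum_congr rfl fun τ _ => ?_
        rw [Finset.mul_sum, Finset.mul_sum]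
        exact Finset.sum_congr rfl fun h _ => by ring
    _ = 2 * ∑ s : S, ∑ a : A, ∑ h ∈ Finset.Icc 1 H,
          (h : ℝ) *
            (∑ τ : Fin H → S × A, wt H s0 π P τ *
              (if stt H τ h = s ∧ act H τ h = a then 1 else 0)) *
            c s a h := by
        congr 1
        simp_rw [e1]
        rw [swap4]
        exact Finset.sum_congr rfl fun τ _ => Finset.sum_congr rfl fun h _ => (key τ h).symm
end

section
/- Single-pair second-moment bound (Lemma: simpler_form_N_times_c of the paper, trajectory form): Let π be a policy, P a transition function, (s̄,ā) ∈ S×A a fixed state-action pair, and c̄ ∈ [0,1]. For a trajectory τ let N_τ(s̄,ā) := #{h ∈ {1,…,H} : (s_h(τ), a_h(τ)) = (s̄,ā)}. Then Σ_{τ ∈ (S×A)^H} w(τ) · N_τ(s̄,ā)² · c̄² ≤ 2 · c̄ · Σ_{h=1}^H h · q(s̄,ā,h), where q(s,a,h) := Σ_{τ ∈ (S×A)^H} w(τ) · 𝟙[s_h(τ) = s and a_h(τ) = a]. -/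
open Finset

lemma sq_sum_le_aux (H : ℕ) (f : ℕ → ℝ) (h0 : ∀ h, 0 ≤ f h) (h1 : ∀ h, f h ≤ 1) :
    (∑ h ∈ Finset.Icc 1 H, f h) ^ 2 ≤ 2 * ∑ h ∈ Finset.Icc 1 H, (h : ℝ) * f h := by
  induction H with
  | zero => simp
  | succ n ih =>
    rw [Finset.sum_Icc_succ_top (by omega), Finset.sum_Icc_succ_top (by omega)]
    have hS : ∑ h ∈ Finset.Icc 1 n, f h ≤ (n : ℝ) := by
      calc ∑ h ∈ Finset.Icc 1 n, f h ≤ ∑ h ∈ Finset.Icc 1 n, (1:ℝ) :=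
            Finset.sum_le_sum (fun i _ => h1 i)
        _ = n := by simp [Nat.card_Icc]
    have hSn : 0 ≤ ∑ h ∈ Finset.Icc 1 n, f h :=
      Finset.sum_nonneg (fun i _ => h0 i)
    have := h0 (n+1); have := h1 (n+1)
    push_cast
    nlinarith

/-- Single-pair second-moment bound (Lemma simpler_form_N_times_c, trajectory form):
for a fixed pair `(s̄,ā)` and `c̄ ∈ [0,1]`, with `N_τ(s̄,ā)` the number of visits of the
trajectory `τ` to `(s̄,ā)`,
`∑_τ w(τ) N_τ(s̄,ā)² c̄² ≤ 2 c̄ ∑_{h=1}^H h · q(s̄,ā,h)`. -/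
theorem single_pair_second_moment
    {S A : Type*} [Fintype S] [Fintype A] [DecidableEq S] [DecidableEq A]
    [Nonempty S] [Nonempty A]
    (H : ℕ) (hH : 2 ≤ H) (s0 : S)
    (π : S → ℕ → A → ℝ)
    (hπ0 : ∀ s, ∀ h ∈ Finset.Icc 1 H, ∀ a, 0 ≤ π s h a)
    (hπ1 : ∀ s, ∀ h ∈ Finset.Icc 1 H, ∑ a : A, π s h a = 1)
    (P : S → A → ℕ → S → ℝ)
    (hP0 : ∀ s a, ∀ h ∈ Finset.Icc 1 (H - 1), ∀ s', 0 ≤ P s a h s')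
    (hP1 : ∀ s a, ∀ h ∈ Finset.Icc 1 (H - 1), ∑ s' : S, P s a h s' = 1)
    (sb : S) (ab : A) (cbar : ℝ) (hcbar0 : 0 ≤ cbar) (hcbar1 : cbar ≤ 1) :
    ∑ τ : Fin H → S × A, wt H s0 π P τ *
        (∑ h ∈ Finset.Icc 1 H,
          (if stt H τ h = sb ∧ act H τ h = ab then (1 : ℝ) else 0)) ^ 2 * cbar ^ 2 ≤
      2 * cbar * ∑ h ∈ Finset.Icc 1 H,
        (h : ℝ) *
          (∑ τ : Fin H → S × A, wt H s0 π P τ *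
            (if stt H τ h = sb ∧ act H τ h = ab then 1 else 0)) := by

  -- rewrite RHS as a sum over trajectories
  have hRHS : 2 * cbar * ∑ h ∈ Finset.Icc 1 H,
        (h : ℝ) * (∑ τ : Fin H → S × A, wt H s0 π P τ *
            (if stt H τ h = sb ∧ act H τ h = ab then 1 else 0))
      = ∑ τ : Fin H → S × A, 2 * cbar * wt H s0 π P τ *
          ∑ h ∈ Finset.Icc 1 H, (h : ℝ) *
            (if stt H τ h = sb ∧ act H τ h = ab then (1:ℝ) else 0) := by
    rw [Finset.mul_sum]
    simp_rw [Finset.mul_sum]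
    rw [Finset.sum_comm]
    apply Finset.sum_congr rfl
    intro τ _
    apply Finset.sum_congr rfl
    intro h _
    ring
  rw [hRHS]
  apply Finset.sum_le_sum
  intro τ _
  have hw : 0 ≤ wt H s0 π P τ := by
    unfold wt
    apply mul_nonneg (mul_nonneg _ _)
    · exact Finset.prod_nonneg fun h hh => hP0 _ _ h hh _
    · split <;> norm_num
    · exact Finset.prod_nonneg fun h hh => hπ0 _ h hh _
  set f : ℕ → ℝ := fun h => if stt H τ h = sb ∧ act H τ h = ab then (1:ℝ) else 0 with hf
  have h0 : ∀ h, 0 ≤ f h := by intro h; simp only [hf]; split <;> norm_num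
  have h1 : ∀ h, f h ≤ 1 := by intro h; simp only [hf]; split <;> norm_num
  have hkey := sq_sum_le_aux H f h0 h1
  have hT : 0 ≤ ∑ h ∈ Finset.Icc 1 H, (h : ℝ) * f h :=
    Finset.sum_nonneg fun h _ => mul_nonneg (by positivity) (h0 h)
  have hc : cbar ^ 2 ≤ cbar := by nlinarith
  nlinarith [mul_nonneg (mul_nonneg hw (sub_nonneg.2 hkey)) (sq_nonneg cbar),
    mul_nonneg (mul_nonneg hw hT) (sub_nonneg.2 hc)]
end
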